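/- arXiv:math/0112076 — 6 statements merged into one kernel-verified Lean document; each statement's English description precedes it below -/
import Mathlib

section
/- For coprime positive integers $a$ and $b$, the Dedekind sums satisfy the reciprocity law $s(a,b) + s(b,a) = -\frac{1}{4} + \frac{1}{12}\left(\frac{a}{b} + \frac{1}{ab} + \frac{b}{a}\right)$. -/
/-!
For `0 < k < b` write `k * a = b * q k + r k` with `0 < r k < b`. Then `((k a / b)) = r k / b - 1/2`
and `((k / b)) = k / b - 1/2`, and since `k ↦ r k` permutes `{1, …, b - 1}` the Dedekind sum becomes
`s(a,b) = P(a,b) / b² - (b - 1) / 4` with `P(a,b) = ∑ k * r k`. Applying the same permutation to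
`∑ (r k)²` expresses `P(a,b)` through `∑ (q k)²`. Counting the lattice points of
`[1, b - 1] × [1, a - 1]` on either side of the diagonal `j * b = k * a` (no point lies on it, by
coprimality), weighted by the second coordinate `j`, relates `∑ (q k)²` to `∑ j * ⌊j b / a⌋`, which
is `P(b,a)` up to explicit power sums. Eliminating these sums leaves a polynomial identity.
-/

open Finset Classical in
/-- The sawtooth function `((x))`. -/
noncomputable def saw (x : ℝ) : ℝ :=
  if ∃ m : ℤ, (m : ℝ) = x then 0 else Int.fract x - 1/2

/-- The classical Dedekind sum `s(a,b)`. -/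
noncomputable def dedekindSum (a b : ℕ) : ℝ :=
  ∑ k ∈ Finset.range b, saw (k * a / b) * saw (k / b)

open Finset

theorem saw_natCast_div {n b : ℕ} (hb : 0 < b) (h : ¬ b ∣ n) :
    saw (n / b) = (n % b : ℕ) / b - 1 / 2 := by
  have hfract : Int.fract ((n : ℝ) / b) = (n % b : ℕ) / b :=
    Int.fract_div_natCast_eq_div_natCast_mod
  have hne : Int.fract ((n : ℝ) / b) ≠ 0 := by
    rw [hfract]
    exact div_ne_zero (Nat.cast_ne_zero.2 (h ∘ Nat.dvd_of_mod_eq_zero)) (by positivity)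
  rw [saw, if_neg, hfract]
  rintro ⟨m, hm⟩
  exact hne (by rw [← hm, Int.fract_intCast])

theorem sum_Ico_one_eq_sum_range {M : Type*} [AddCommMonoid M] {f : ℕ → M} (hf : f 0 = 0)
    (n : ℕ) : ∑ k ∈ Ico 1 n, f k = ∑ k ∈ range n, f k := by
  rcases n.eq_zero_or_pos with rfl | hn
  · rfl
  · rw [sum_range_eq_add_Ico _ hn, hf, zero_add]

theorem sum_Ico_one_natCast_mul_two {R : Type*} [CommRing R] (n : ℕ) :
    (∑ i ∈ Ico 1 n, (i : R)) * 2 = n * (n - 1) := by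
  rw [sum_Ico_one_eq_sum_range Nat.cast_zero]
  induction n with
  | zero => simp
  | succ n ih => rw [sum_range_succ, add_mul, ih]; push_cast; ring

theorem sum_Ico_one_natCast_sq_mul_six {R : Type*} [CommRing R] (n : ℕ) :
    (∑ i ∈ Ico 1 n, (i : R) ^ 2) * 6 = n * (n - 1) * (2 * n - 1) := by
  rw [sum_Ico_one_eq_sum_range (by simp)]
  induction n with
  | zero => simp
  | succ n ih => rw [sum_range_succ, add_mul, ih]; push_cast; ring

theorem sum_Ico_mul_mod_add_mul_sum_Ico_mul_div (a b : ℕ) :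
    ∑ k ∈ Ico 1 b, k * (k * a % b) + b * ∑ k ∈ Ico 1 b, k * (k * a / b)
      = a * ∑ k ∈ Ico 1 b, k ^ 2 := by
  rw [mul_sum, mul_sum, ← sum_add_distrib]
  exact sum_congr rfl fun k _ => by linear_combination k * Nat.mod_add_div (k * a) b

section

variable {a b : ℕ}

theorem Nat.Coprime.not_dvd_mul_of_pos_of_lt (hab : a.Coprime b) {k : ℕ} (hk : 0 < k)
    (hkb : k < b) : ¬ b ∣ k * a :=
  fun h => Nat.not_dvd_of_pos_of_lt hk hkb (hab.symm.dvd_mul_right.1 h)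

theorem Nat.Coprime.mul_ne_mul (hab : a.Coprime b) {k : ℕ} (hk : 0 < k) (hkb : k < b)
    (j : ℕ) : j * b ≠ k * a :=
  fun h => hab.not_dvd_mul_of_pos_of_lt hk hkb ⟨j, by rw [← h, mul_comm]⟩

theorem Nat.Coprime.sum_Ico_mul_mod {M : Type*} [AddCommMonoid M] (hab : a.Coprime b)
    (f : ℕ → M) : ∑ k ∈ Ico 1 b, f (k * a % b) = ∑ k ∈ Ico 1 b, f k := by
  have hmaps : Set.MapsTo (· * a % b) (Ico 1 b : Set ℕ) (Ico 1 b) := by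
    intro k hk
    obtain ⟨hk1, hkb⟩ := mem_Ico.1 hk
    have hr := Nat.mod_lt (k * a) (by omega : 0 < b)
    have := mt Nat.dvd_of_mod_eq_zero (hab.not_dvd_mul_of_pos_of_lt hk1 hkb)
    simp only [coe_Ico, Set.mem_Ico]
    omega
  have hinj : Set.InjOn (· * a % b) (Ico 1 b : Set ℕ) := by
    intro k hk l hl h
    exact Nat.ModEq.eq_of_lt_of_lt (Nat.ModEq.cancel_right_of_coprime (Nat.coprime_comm.1 hab) h)
      (mem_Ico.1 hk).2 (mem_Ico.1 hl).2
  exact sum_nbij _ hmaps hinj (surjOn_of_injOn_of_card_le _ hmaps hinj le_rfl) fun _ _ => rfl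

theorem Nat.Coprime.filter_Ico_mul_lt_mul (hab : a.Coprime b) {k : ℕ} (hk : 0 < k)
    (hkb : k < b) : (Ico 1 a).filter (fun j => j * b < k * a) = Ico 1 (k * a / b + 1) := by
  have hb : 0 < b := hk.trans hkb
  have ha : 0 < a := Nat.pos_of_ne_zero (by rintro rfl; rw [Nat.coprime_zero_left] at hab; omega)
  have hq : k * a / b < a :=
    (Nat.div_lt_iff_lt_mul hb).2 (by rw [mul_comm a]; exact (Nat.mul_lt_mul_right ha).2 hkb)
  ext j
  have := hab.mul_ne_mul hk hkb j
  have hle : j ≤ k * a / b ↔ j * b ≤ k * a := Nat.le_div_iff_mul_le hb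
  simp only [mem_filter, mem_Ico]
  omega

theorem Nat.Coprime.lattice_count (hab : a.Coprime b) :
    ∑ k ∈ Ico 1 b, (k * a / b) ^ 2 + ∑ k ∈ Ico 1 b, k * a / b
      + 2 * ∑ j ∈ Ico 1 a, j * (j * b / a) = (b - 1) * (a * (a - 1)) := by
  have gauss : ∀ n, ∑ j ∈ Ico 1 n, 2 * j = n * (n - 1) := fun n => by
    rw [← mul_sum, sum_Ico_one_eq_sum_range (f := fun i => i) rfl, mul_comm]
    exact sum_range_id_mul_two n
  have hrow : ∀ k ∈ Ico 1 b, ∑ j ∈ Ico 1 a, (if j * b < k * a then 2 * j else 0)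
      = (k * a / b) ^ 2 + k * a / b := by
    intro k hk
    obtain ⟨hk1, hkb⟩ := mem_Ico.1 hk
    rw [← sum_filter, hab.filter_Ico_mul_lt_mul hk1 hkb, gauss, Nat.add_sub_cancel]
    ring
  have hcol : ∀ j ∈ Ico 1 a, ∑ k ∈ Ico 1 b, (if k * a < j * b then 2 * j else 0)
      = 2 * (j * (j * b / a)) := by
    intro j hj
    obtain ⟨hj1, hja⟩ := mem_Ico.1 hj
    rw [← sum_filter, hab.symm.filter_Ico_mul_lt_mul hj1 hja, sum_const, Nat.card_Ico,
      Nat.add_sub_cancel, smul_eq_mul]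
    ring
  have hsplit : ∀ k ∈ Ico 1 b, ∀ j ∈ Ico 1 a,
      (if j * b < k * a then 2 * j else 0) + (if k * a < j * b then 2 * j else 0) = 2 * j := by
    intro k hk j _
    have := hab.mul_ne_mul (mem_Ico.1 hk).1 (mem_Ico.1 hk).2 j
    split_ifs <;> omega
  calc _ = ∑ k ∈ Ico 1 b, ∑ j ∈ Ico 1 a, (if j * b < k * a then 2 * j else 0)
        + ∑ j ∈ Ico 1 a, ∑ k ∈ Ico 1 b, (if k * a < j * b then 2 * j else 0) := by
          rw [sum_congr rfl hrow, sum_add_distrib, mul_sum, sum_congr rfl hcol]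
    _ = ∑ k ∈ Ico 1 b, ∑ j ∈ Ico 1 a, 2 * j := by
          rw [sum_comm (s := Ico 1 a), ← sum_add_distrib]
          exact sum_congr rfl fun k hk => by rw [← sum_add_distrib]; exact sum_congr rfl (hsplit k hk)
    _ = (b - 1) * (a * (a - 1)) := by rw [sum_const, gauss, Nat.card_Ico, smul_eq_mul]

theorem Nat.Coprime.mul_sum_Ico_div_add_sum_Ico (hab : a.Coprime b) :
    b * ∑ k ∈ Ico 1 b, k * a / b + ∑ k ∈ Ico 1 b, k = a * ∑ k ∈ Ico 1 b, k := by
  have hres : ∑ k ∈ Ico 1 b, k * a % b = ∑ k ∈ Ico 1 b, k := hab.sum_Ico_mul_mod (fun k => k)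
  rw [mul_sum, mul_sum, ← hres, ← sum_add_distrib]
  exact sum_congr rfl fun k _ => by linear_combination Nat.div_add_mod (k * a) b

theorem Nat.Coprime.two_mul_mul_sum_Ico_mul_mod_add_sum_Ico_div_sq (hab : a.Coprime b) :
    2 * a * ∑ k ∈ Ico 1 b, k * (k * a % b) + b ^ 2 * ∑ k ∈ Ico 1 b, (k * a / b) ^ 2
      = (a ^ 2 + 1) * ∑ k ∈ Ico 1 b, k ^ 2 := by
  have hres : ∑ k ∈ Ico 1 b, (k * a % b) ^ 2 = ∑ k ∈ Ico 1 b, k ^ 2 :=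
    hab.sum_Ico_mul_mod (· ^ 2)
  rw [add_mul, one_mul, mul_sum, mul_sum, mul_sum, ← hres, ← sum_add_distrib, ← sum_add_distrib]
  refine sum_congr rfl fun k _ => ?_
  have h := Nat.mod_add_div (k * a) b
  generalize k * a % b = r at h ⊢
  generalize k * a / b = q at h ⊢
  zify at h ⊢
  linear_combination (b * q + k * a - r : ℤ) * h

theorem Nat.Coprime.sum_Ico_mul_mod_reciprocity (hab : a.Coprime b) (ha : 0 < a) (hb : 0 < b) :
    12 * a ^ 2 * ∑ k ∈ Ico 1 b, k * (k * a % b) + 12 * b ^ 2 * ∑ j ∈ Ico 1 a, j * (j * b % a)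
      + 9 * a ^ 2 * b ^ 2 = 3 * a ^ 2 * b ^ 2 * (a + b) + a * b * (a ^ 2 + b ^ 2 + 1) := by
  have hsq := hab.two_mul_mul_sum_Ico_mul_mod_add_sum_Ico_div_sq
  have hlat := hab.lattice_count
  have hlin := hab.mul_sum_Ico_div_add_sum_Ico
  have hdual := sum_Ico_mul_mod_add_mul_sum_Ico_mul_div b a
  have s1b := sum_Ico_one_natCast_mul_two (R := ℤ) b
  have s2b := sum_Ico_one_natCast_sq_mul_six (R := ℤ) b
  have s2a := sum_Ico_one_natCast_sq_mul_six (R := ℤ) a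
  zify [ha, hb] at hsq hlat hlin hdual ⊢
  -- `hsq` and `hlat` eliminate `∑ (k * a / b) ^ 2`, `hdual` trades `∑ j * (j * b / a)` for the
  -- second residue sum, and `hlin` evaluates `∑ k * a / b`.
  linear_combination 6 * a * hsq - 6 * a * b ^ 2 * hlat + 6 * a * b * hlin + 12 * b ^ 2 * hdual
    + 3 * a * b * (a - 1) * s1b + a * (a ^ 2 + 1) * s2b + 2 * b ^ 3 * s2a

theorem Nat.Coprime.dedekindSum_eq_sum_Ico_mul_mod (hab : a.Coprime b) (hb : 0 < b) :
    dedekindSum a b = ((∑ k ∈ Ico 1 b, k * (k * a % b) : ℕ) : ℝ) / b ^ 2 - (b - 1) / 4 := by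
  have hterm : ∀ k ∈ Ico 1 b, saw (k * a / b) * saw (k / b)
      = k * (k * a % b : ℕ) / b ^ 2 - ((k * a % b : ℕ) + k) / (2 * b) + 1 / 4 := by
    intro k hk
    obtain ⟨hk1, hkb⟩ := mem_Ico.1 hk
    have h1 := saw_natCast_div (n := k * a) hb (hab.not_dvd_mul_of_pos_of_lt hk1 hkb)
    have h2 := saw_natCast_div (n := k) hb (Nat.not_dvd_of_pos_of_lt hk1 hkb)
    push_cast at h1
    rw [h1, h2, Nat.mod_eq_of_lt hkb]
    field_simp
    ring
  have hres : ∑ k ∈ Ico 1 b, ((k * a % b : ℕ) : ℝ) = ∑ k ∈ Ico 1 b, (k : ℝ) :=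
    hab.sum_Ico_mul_mod (fun n => (n : ℝ))
  have hgauss := sum_Ico_one_natCast_mul_two (R := ℝ) b
  rw [dedekindSum, ← sum_Ico_one_eq_sum_range (by simp [saw]), sum_congr rfl hterm,
    sum_add_distrib, sum_sub_distrib, ← sum_div, ← sum_div, sum_add_distrib, hres, sum_const,
    Nat.card_Ico, nsmul_eq_mul, Nat.cast_sub hb]
  push_cast
  field_simp
  linear_combination -4 * (b : ℝ) * hgauss

end

theorem dedekind_reciprocity (a b : ℕ) (ha : 0 < a) (hb : 0 < b)
    (hab : Nat.Coprime a b) :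
    dedekindSum a b + dedekindSum b a =
      -1/4 + 1/12 * ((a : ℝ)/b + 1/(a*b) + (b : ℝ)/a) := by
  have h : (12 * a ^ 2 * ((∑ k ∈ Ico 1 b, k * (k * a % b) : ℕ) : ℝ)
      + 12 * b ^ 2 * ((∑ j ∈ Ico 1 a, j * (j * b % a) : ℕ) : ℝ) + 9 * a ^ 2 * b ^ 2 : ℝ)
      = 3 * a ^ 2 * b ^ 2 * (a + b) + a * b * (a ^ 2 + b ^ 2 + 1) := by
    exact_mod_cast hab.sum_Ico_mul_mod_reciprocity ha hb
  rw [hab.dedekindSum_eq_sum_Ico_mul_mod hb, hab.symm.dedekindSum_eq_sum_Ico_mul_mod ha]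
  field_simp
  linear_combination 4 * h
end

section
/- For coprime positive integers $a, b$, the Dedekind sum admits the cotangent representation $s(a,b) = \frac{1}{4b} \sum_{k=1}^{b-1} \cot\frac{\pi k a}{b} \cot\frac{\pi k}{b}$. -/
/-!
The sawtooth has the finite Fourier expansion `cot (π m / b) = 2i ∑_{k<b} ((k/b)) ζ^{mk}` with
`ζ = exp (2πi/b)`, which comes from `∑_{k<b} k z^k = b / (z - 1)` for a `b`-th root of unity
`z ≠ 1`. Multiplying the expansions at `m = ja` and `m = j`, summing over `j` and using the
orthogonality of the powers of `ζ` collapses the double sum over `k, l` to the terms with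
`l ≡ -ka (mod b)`; since the sawtooth is odd and `1`-periodic, this gives `4b · s(a,b)`.
-/

open Finset Complex Real

lemma saw_intCast (m : ℤ) : saw m = 0 := if_pos ⟨m, rfl⟩

lemma saw_add_intCast (x : ℝ) (m : ℤ) : saw (x + m) = saw x := by
  by_cases hx : ∃ n : ℤ, (n : ℝ) = x
  · obtain ⟨n, rfl⟩ := hx
    rw [← Int.cast_add, saw_intCast, saw_intCast]
  · have hxm : ¬ ∃ n : ℤ, (n : ℝ) = x + m := fun ⟨n, h⟩ => hx ⟨n - m, by push_cast; linarith⟩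
    rw [saw, saw, if_neg hx, if_neg hxm, Int.fract_add_intCast]

lemma saw_neg (x : ℝ) : saw (-x) = -saw x := by
  by_cases hx : ∃ n : ℤ, (n : ℝ) = x
  · obtain ⟨n, rfl⟩ := hx
    rw [← Int.cast_neg, saw_intCast, saw_intCast, neg_zero]
  · have hnx : ¬ ∃ n : ℤ, (n : ℝ) = -x := fun ⟨n, h⟩ => hx ⟨-n, by push_cast; linarith⟩
    have hfract : Int.fract x ≠ 0 := fun h => hx (by simpa [eq_comm] using Int.fract_eq_zero_iff.1 h)
    rw [saw, saw, if_neg hx, if_neg hnx, Int.fract_neg hfract]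
    ring

lemma saw_natCast_div_of_lt {k b : ℕ} (hkb : k < b) :
    saw (k / b) = k / b - 1 / 2 + if k = 0 then 1 / 2 else 0 := by
  rcases k.eq_zero_or_pos with rfl | hk
  · simpa using saw_intCast 0
  have hnot : ¬ ∃ m : ℤ, (m : ℝ) = k / b := by
    rintro ⟨m, hm⟩
    have hb : (0 : ℝ) < b := by exact_mod_cast hk.trans hkb
    have h0 : (0 : ℝ) < m := by rw [hm]; positivity
    have h1 : (m : ℝ) < 1 := by rw [hm, div_lt_one (by positivity)]; exact_mod_cast hkb
    have h0' : (0 : ℤ) < m := by exact_mod_cast h0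
    have h1' : m < 1 := by exact_mod_cast h1
    omega
  rw [saw, if_neg hnot, Int.fract_div_natCast_eq_div_natCast_mod, Nat.mod_eq_of_lt hkb,
    if_neg hk.ne', add_zero]

lemma saw_div_eq_neg_of_dvd_add {b n l : ℕ} (hb : 0 < b) (h : b ∣ n + l) :
    saw (l / b) = -saw (n / b) := by
  obtain ⟨c, hc⟩ := h
  have hl : (l : ℝ) / b = -(n / b) + (c : ℤ) := by
    have hc' : (n : ℝ) + l = b * c := by exact_mod_cast hc
    field_simp
    push_cast
    linarith
  rw [hl, saw_add_intCast, saw_neg]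

lemma mul_sum_range_natCast_mul_pow {R : Type*} [CommRing R] (z : R) (n : ℕ) :
    (z - 1) * ∑ k ∈ range n, (k : R) * z ^ k = n * z ^ n - z * ∑ k ∈ range n, z ^ k := by
  induction n with
  | zero => simp
  | succ n ih =>
    rw [sum_range_succ, sum_range_succ, mul_add, ih]
    push_cast
    ring

lemma sum_range_natCast_mul_pow_of_pow_eq_one {K : Type*} [Field K] {z : K} {b : ℕ}
    (hz : z ^ b = 1) (hz1 : z ≠ 1) : ∑ k ∈ range b, (k : K) * z ^ k = b / (z - 1) := by
  have hsub : z - 1 ≠ 0 := sub_ne_zero.2 hz1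
  rw [eq_div_iff hsub, mul_comm, mul_sum_range_natCast_mul_pow, hz, geom_sum_eq hz1 b, hz]
  simp

-- At `z = 1` the right side is `0` (division by zero), as is `∑ k < b, ((k/b))`; so the cotangent
-- expansion below holds at the poles `b ∣ m` too, where `Real.cot` is `0`.
lemma sum_range_saw_div_mul_pow {b : ℕ} (hb : 0 < b) {z : ℂ} (hz : z ^ b = 1) :
    ∑ k ∈ range b, (saw (k / b) : ℂ) * z ^ k = (z + 1) / (2 * (z - 1)) := by
  have hb' : (b : ℂ) ≠ 0 := by exact_mod_cast hb.ne'
  have hsaw : ∑ k ∈ range b, (saw (k / b) : ℂ) * z ^ k =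
      (∑ k ∈ range b, (k : ℂ) * z ^ k) / b - (∑ k ∈ range b, z ^ k) / 2 + 1 / 2 := by
    rw [sum_div, sum_div, ← sum_sub_distrib, ← sum_ite_eq_of_mem' (range b) 0 (fun _ => (1 / 2 : ℂ))
      (mem_range.2 hb), ← sum_add_distrib]
    refine sum_congr rfl fun k hk => ?_
    rw [saw_natCast_div_of_lt (mem_range.1 hk)]
    split_ifs with h
    · subst h
      push_cast
      ring
    · push_cast
      ring
  rw [hsaw]
  rcases eq_or_ne z 1 with rfl | hz1
  · have hgauss : (∑ i ∈ range b, (i : ℂ)) * 2 = b * (b - 1) := by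
      have := congrArg (Nat.cast : ℕ → ℂ) (Finset.sum_range_id_mul_two b)
      push_cast [Nat.cast_sub hb] at this
      exact this
    simp only [one_pow, mul_one, sum_const, card_range, nsmul_eq_mul, sub_self, mul_zero, div_zero]
    field_simp
    linear_combination hgauss
  · rw [sum_range_natCast_mul_pow_of_pow_eq_one hz hz1, geom_sum_eq hz1, hz]
    field_simp
    ring

lemma sum_range_pow_mul_eq_ite {b : ℕ} {ζ : ℂ} (hζ : IsPrimitiveRoot ζ b) (n : ℕ) :
    ∑ j ∈ range b, ζ ^ (j * n) = if b ∣ n then (b : ℂ) else 0 := by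
  simp only [mul_comm _ n, pow_mul]
  split_ifs with h
  · simp [(hζ.pow_eq_one_iff_dvd n).2 h]
  · rw [geom_sum_eq (mt (hζ.pow_eq_one_iff_dvd n).1 h), ← pow_mul, mul_comm, pow_mul,
      hζ.pow_eq_one, one_pow, sub_self, zero_div]

lemma cot_pi_mul_div_eq_sum_saw {b : ℕ} (hb : 0 < b) (m : ℕ) :
    (Real.cot (π * m / b) : ℂ) =
      2 * I * ∑ k ∈ range b, (saw (k / b) : ℂ) * Complex.exp (2 * π * I / b) ^ (m * k) := by
  have hζ := Complex.isPrimitiveRoot_exp b hb.ne'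
  have hexp : Complex.exp (2 * π * I * (m / b)) = Complex.exp (2 * π * I / b) ^ m := by
    rw [← Complex.exp_nat_mul]
    ring_nf
  have hz : (Complex.exp (2 * π * I / b) ^ m) ^ b = 1 := by
    rw [pow_right_comm, hζ.pow_eq_one, one_pow]
  simp only [pow_mul]
  rw [sum_range_saw_div_mul_pow hb hz, Complex.ofReal_cot,
    show ((π * m / b : ℝ) : ℂ) = π * (m / b) by push_cast; ring, Complex.cot_pi_eq_exp_ratio, hexp]
  generalize Complex.exp (2 * π * I / b) ^ m = z
  rcases eq_or_ne z 1 with rfl | hz1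
  · simp
  · field_simp
    linear_combination (z + 1) * (z - 1) * Complex.I_sq

lemma existsUnique_lt_dvd_add {b : ℕ} (hb : 0 < b) (n : ℕ) : ∃! l, l < b ∧ b ∣ n + l := by
  have hdvd : b ∣ n + (b * n - n) % b := by
    have hle : n ≤ b * n := Nat.le_mul_of_pos_left n hb
    refine Nat.modEq_zero_iff_dvd.1 ((Nat.ModEq.add_left n (Nat.mod_modEq _ _)).trans ?_)
    rw [Nat.add_sub_cancel' hle]
    exact Nat.modEq_zero_iff_dvd.2 (dvd_mul_right b n)
  refine ⟨(b * n - n) % b, ⟨Nat.mod_lt _ hb, hdvd⟩, fun l ⟨hl, hl_dvd⟩ => ?_⟩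
  have hmod : l ≡ (b * n - n) % b [MOD b] :=
    Nat.ModEq.add_left_cancel' n ((Nat.modEq_zero_iff_dvd.2 hl_dvd).trans
      (Nat.modEq_zero_iff_dvd.2 hdvd).symm)
  rwa [Nat.ModEq, Nat.mod_eq_of_lt hl, Nat.mod_mod] at hmod

lemma sum_range_saw_div_mul_ite_dvd_add {b : ℕ} (hb : 0 < b) (n : ℕ) :
    ∑ l ∈ range b, (saw (l / b) : ℂ) * (if b ∣ n + l then (b : ℂ) else 0) = -b * saw (n / b) := by
  obtain ⟨l₀, ⟨hl₀, hdvd⟩, huniq⟩ := existsUnique_lt_dvd_add hb n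
  rw [sum_eq_single_of_mem l₀ (mem_range.2 hl₀) fun l hl hne => by
    rw [if_neg fun h => hne (huniq l ⟨mem_range.1 hl, h⟩), mul_zero],
    if_pos hdvd, saw_div_eq_neg_of_dvd_add hb hdvd]
  push_cast
  ring

lemma sum_range_cot_mul_cot (a b : ℕ) :
    ∑ j ∈ range b, Real.cot (π * j * a / b) * Real.cot (π * j / b) = 4 * b * dedekindSum a b := by
  rcases b.eq_zero_or_pos with rfl | hb
  · simp [dedekindSum]
  set ζ := Complex.exp (2 * π * I / b)
  have hζ : IsPrimitiveRoot ζ b := Complex.isPrimitiveRoot_exp b hb.ne'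
  apply Complex.ofReal_injective
  calc ((∑ j ∈ range b, Real.cot (π * j * a / b) * Real.cot (π * j / b) : ℝ) : ℂ)
      = ∑ j ∈ range b, (2 * I * ∑ k ∈ range b, (saw (k / b) : ℂ) * ζ ^ (j * a * k)) *
          (2 * I * ∑ l ∈ range b, (saw (l / b) : ℂ) * ζ ^ (j * l)) := by
        push_cast
        refine sum_congr rfl fun j _ => ?_
        rw [← cot_pi_mul_div_eq_sum_saw hb, ← cot_pi_mul_div_eq_sum_saw hb]
        push_cast
        ring_nf
    _ = -4 * ∑ k ∈ range b, (saw (k / b) : ℂ) * ∑ l ∈ range b, (saw (l / b) : ℂ) *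
          ∑ j ∈ range b, ζ ^ (j * (k * a + l)) := by
        simp_rw [mul_mul_mul_comm (2 * I), sum_mul_sum, mul_sum]
        rw [sum_comm]
        refine sum_congr rfl fun k _ => ?_
        rw [sum_comm]
        refine sum_congr rfl fun l _ => sum_congr rfl fun j _ => ?_
        rw [mul_add, pow_add, ← mul_assoc, mul_right_comm j]
        linear_combination (4 * (saw (k / b) : ℂ) * saw (l / b) * ζ ^ (j * k * a) * ζ ^ (j * l)) *
          Complex.I_sq
    _ = -4 * ∑ k ∈ range b, (saw (k / b) : ℂ) * (-b * saw ((k * a : ℕ) / b)) := by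
        simp only [sum_range_pow_mul_eq_ite hζ, sum_range_saw_div_mul_ite_dvd_add hb]
    _ = ((4 * b * dedekindSum a b : ℝ) : ℂ) := by
        rw [dedekindSum, mul_sum, mul_sum]
        push_cast
        refine sum_congr rfl fun k _ => ?_
        ring

theorem dedekindSum_eq_cot_sum_general (a b : ℕ) (hb : 0 < b) :
    dedekindSum a b =
      1 / (4 * b) * ∑ k ∈ Finset.Ico 1 b,
        Real.cot (Real.pi * k * a / b) * Real.cot (Real.pi * k / b) := by
  have hb' : (b : ℝ) ≠ 0 := by positivity
  calc dedekindSum a b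
      = 1 / (4 * b) * ∑ k ∈ range b, Real.cot (π * k * a / b) * Real.cot (π * k / b) := by
        rw [sum_range_cot_mul_cot]
        field_simp
    _ = 1 / (4 * b) * ∑ k ∈ Ico 1 b, Real.cot (π * k * a / b) * Real.cot (π * k / b) := by
        rw [range_eq_Ico, sum_eq_sum_Ico_succ_bot hb]
        simp [Real.cot_eq_cos_div_sin]

theorem dedekindSum_eq_cot_sum (a b : ℕ) (ha : 0 < a) (hb : 0 < b)
    (hab : Nat.Coprime a b) :
    dedekindSum a b =
      1 / (4 * b) * ∑ k ∈ Finset.Ico 1 b,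
        Real.cot (Real.pi * k * a / b) * Real.cot (Real.pi * k / b) :=
  dedekindSum_eq_cot_sum_general a b hb
end

section
/- Let $p$ and $q$ be coprime positive integers and suppose $1 \le n \le p+q$. Then $\frac{1}{p}\sum_{\lambda^p=1, \lambda \neq 1} \frac{\lambda^n}{(1-\lambda^q)(1-\lambda)} + \frac{1}{q}\sum_{\lambda^q=1, \lambda \neq 1} \frac{\lambda^n}{(1-\lambda^p)(1-\lambda)} = -\frac{n^2}{2pq} + \frac{n}{2}\left(\frac{1}{p}+\frac{1}{q}+\frac{1}{pq}\right) - \frac{1}{4}\left(\frac{1}{p}+\frac{1}{q}+1\right) - \frac{1}{12}\left(\frac{p}{q}+\frac{1}{pq}+\frac{q}{p}\right)$ (Gessel's reciprocity law). -/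
open Finset Polynomial

/-!
Both sums are sums of residues of `z ^ (n - 1) / ((z - 1) (z ^ p - 1) (z ^ q - 1))`. At a nontrivial
`p`-th root of unity `λ` (not a `q`-th root, as `p` and `q` are coprime) the pole is simple with
residue `λ ^ n / (p (1 - λ ^ q) (1 - λ))`, and symmetrically for `q`. As `n ≤ p + q`, the
denominator has degree at least two more than the numerator, so all residues add up to zero; the
remaining pole is the triple pole at `1`, whose residue is minus the right-hand side, computed from
the second-order Taylor expansions of `z ^ (n - 1)` and `(z ^ p - 1) / (z - 1)` at `1`.

Algebraically: with `D = ∏ (X - λ)` over the simple poles, write `X ^ (n - 1) = R D + (X - 1) ^ 3 P`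
with `R` quadratic (the principal part at `1`). The residue at `λ` is `P(λ) / D'(λ)`, and by Lagrange
interpolation these sum to the coefficient of `X ^ (deg D - 1)` in `P`, which is minus the
`(X - 1) ^ 2`-coefficient of `R`.
-/

namespace Polynomial

section CommRing

variable {R : Type*} [CommRing R]

theorem iterate_derivative_succ_mul_X_sub_C (u : R[X]) (x : R) (k : ℕ) :
    derivative^[k + 1] (u * (X - C x)) =
      derivative^[k + 1] u * (X - C x) + (k + 1 : R[X]) * derivative^[k] u := by
  induction k with
  | zero => simp [derivative_mul]
  | succ k ih =>
    rw [Function.iterate_succ_apply', ih, Function.iterate_succ_apply' _ (k + 1),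
      Function.iterate_succ_apply' _ k]
    simp only [derivative_add, derivative_mul, derivative_sub, derivative_X, derivative_C]
    push_cast
    simp only [derivative_natCast, derivative_one, sub_zero, mul_one, add_zero, zero_mul, zero_add]
    ring

theorem eval_one_iterate_derivative_of_mul_X_sub_one_eq {u : R[X]} {p : ℕ}
    (hu : u * (X - C 1) = X ^ p - 1) (k : ℕ) :
    (k + 1) * (derivative^[k] u).eval 1 = p.descFactorial (k + 1) := by
  have := congrArg (fun f => (derivative^[k + 1] f).eval 1) hu
  simp only [iterate_derivative_succ_mul_X_sub_C] at this
  simpa [iterate_derivative_sub, iterate_derivative_X_pow_eq_smul] using this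

variable [IsDomain R] [CharZero R]

theorem X_sub_C_pow_succ_dvd_of_isRoot_iterate_derivative {f : R[X]} {x : R} {n : ℕ}
    (h : ∀ m ≤ n, (derivative^[m] f).IsRoot x) : (X - C x) ^ (n + 1) ∣ f := by
  rcases eq_or_ne f 0 with rfl | hf
  · exact dvd_zero _
  exact (le_rootMultiplicity_iff hf).mp (lt_rootMultiplicity_of_isRoot_iterate_derivative hf h)

theorem X_sub_C_pow_three_dvd_sub_mul {f w : R[X]} {x a b c : R}
    (h0 : f.eval x = a * w.eval x)
    (h1 : f.derivative.eval x = b * w.eval x + a * w.derivative.eval x)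
    (h2 : f.derivative.derivative.eval x =
      2 * c * w.eval x + 2 * b * w.derivative.eval x + a * w.derivative.derivative.eval x) :
    (X - C x) ^ 3 ∣ f - (C a + C b * (X - C x) + C c * (X - C x) ^ 2) * w := by
  refine X_sub_C_pow_succ_dvd_of_isRoot_iterate_derivative fun k hk => ?_
  interval_cases k <;>
    simp only [Function.iterate_zero, Function.iterate_succ, Function.comp_apply, id_eq,
      IsRoot.def, derivative_sub, derivative_mul, derivative_add, derivative_C, derivative_X,
      derivative_sq, eval_sub, eval_add, eval_mul, eval_C, eval_X, eval_pow, sub_self,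
      zero_mul, mul_zero, sub_zero, mul_one, zero_add, add_zero]
  · linear_combination h0
  · linear_combination h1
  · linear_combination h2

end CommRing

section CharZero

variable {K : Type*} [Field K] [CharZero K]

theorem eval_one_of_mul_X_sub_one_eq {u : K[X]} {p : ℕ} (hu : u * (X - C 1) = X ^ p - 1) :
    u.eval 1 = p ∧ u.derivative.eval 1 = p * (p - 1) / 2 ∧
      u.derivative.derivative.eval 1 = p * (p - 1) * (p - 2) / 3 := by
  have h := eval_one_iterate_derivative_of_mul_X_sub_one_eq hu
  refine ⟨by simpa using h 0, ?_, ?_⟩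
  · have h1 := h 1
    rw [Nat.cast_descFactorial_two] at h1
    simp only [Function.iterate_one] at h1
    linear_combination h1 / 2
  · have h2 := h 2
    rw [← descPochhammer_eval_eq_descFactorial] at h2
    simp only [Function.iterate_succ, Function.iterate_zero, id_eq, Function.comp_apply,
      descPochhammer_succ_right, descPochhammer_zero, one_mul, Nat.cast_one, Nat.cast_ofNat,
      CharP.cast_eq_zero, sub_zero, eval_mul, eval_X, eval_sub, eval_one, eval_ofNat] at h2
    linear_combination h2 / 3

def gesselQuadratic (p q : ℕ) (n : K) : K :=
  -n ^ 2 / (2 * p * q) + (n / 2) * (1 / p + 1 / q + 1 / (p * q)) - (1 / 4) * (1 / p + 1 / q + 1) -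
    (1 / 12) * (p / q + 1 / (p * q) + q / p)

theorem X_sub_one_pow_three_dvd_X_pow_sub_mul {u v : K[X]} {p q : ℕ} (hp : 0 < p) (hq : 0 < q)
    (hu : u * (X - C 1) = X ^ p - 1) (hv : v * (X - C 1) = X ^ q - 1) (m : ℕ) :
    (X - C 1) ^ 3 ∣ X ^ m - (C (p * q : K)⁻¹ + C ((m - (p + q - 2) / 2) / (p * q) : K) * (X - C 1) +
      C (-gesselQuadratic p q (m + 1 : K)) * (X - C 1) ^ 2) * (u * v) := by
  obtain ⟨hu0, hu1, hu2⟩ := eval_one_of_mul_X_sub_one_eq hu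
  obtain ⟨hv0, hv1, hv2⟩ := eval_one_of_mul_X_sub_one_eq hv
  have hp0 : (p : K) ≠ 0 := Nat.cast_ne_zero.mpr hp.ne'
  have hq0 : (q : K) ≠ 0 := Nat.cast_ne_zero.mpr hq.ne'
  have hX2 : (derivative (derivative (X ^ m : K[X]))).eval 1 = m * (m - 1) := by
    have := congrArg (eval 1) (iterate_derivative_X_pow_eq_smul (R := K) m 2)
    rw [Nat.cast_descFactorial_two] at this
    simpa using this
  apply X_sub_C_pow_three_dvd_sub_mul
  · simp only [eval_pow, eval_X, one_pow, eval_mul, hu0, hv0]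
    field_simp
  · simp only [derivative_X_pow, derivative_mul, map_natCast, eval_mul, eval_natCast, eval_pow,
      eval_X, one_pow, mul_one, eval_add, hu0, hv0, hu1, hv1]
    field_simp
    ring
  · simp only [hX2, derivative_mul, derivative_add, eval_mul, eval_add, hu0, hv0, hu1, hv1, hu2,
      hv2, gesselQuadratic]
    field_simp
    ring

end CharZero

section Field

variable {K : Type*} [Field K]

theorem degree_lt_and_coeff_eq_of_X_sub_C_pow_three_mul_eq {s : Finset K} {f P : K[X]}
    {x a b c : K} (hf : f.natDegree ≤ #s + 1)
    (hP : f - (C a + C b * (X - C x) + C c * (X - C x) ^ 2) * Lagrange.nodal s id =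
      (X - C x) ^ 3 * P) :
    P.degree < #s ∧ P.coeff (#s - 1) = -c := by
  set R : K[X] := C a + C b * (X - C x) + C c * (X - C x) ^ 2
  have hR : R.natDegree ≤ 2 := by
    simp only [R]; compute_degree
  have hRc : R.coeff 2 = c := by
    simp [R, sub_sq, coeff_X, ← C_pow, -map_pow]
  have hnodal : (Lagrange.nodal s id).coeff #s = 1 := by
    simpa [Lagrange.natDegree_nodal] using (Lagrange.nodal_monic (s := s) (v := id)).coeff_natDegree
  have hcube : ((X - C x) ^ 3).natDegree = 3 := by simp
  have hPnat (hP0 : P ≠ 0) : P.natDegree + 3 ≤ #s + 2 := by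
    have hprod := natDegree_mul (pow_ne_zero 3 (X_sub_C_ne_zero x)) hP0
    have hrhs : (f - R * Lagrange.nodal s id).natDegree ≤ #s + 2 :=
      (natDegree_sub_le _ _).trans <| max_le (by omega) <|
        (natDegree_mul_le_of_le hR Lagrange.natDegree_nodal.le).trans (by omega)
    rw [← hP] at hprod
    omega
  refine ⟨?_, ?_⟩
  · rcases eq_or_ne P 0 with rfl | hP0
    · simp
    · rw [degree_eq_natDegree hP0]
      exact_mod_cast (by have := hPnat hP0; omega)
  have hlead : ((X - C x) ^ 3 * P).coeff (#s + 2) = -c := by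
    rw [← hP, coeff_sub, coeff_eq_zero_of_natDegree_lt (by omega), add_comm,
      coeff_mul_add_eq_of_natDegree_le hR Lagrange.natDegree_nodal.le, hRc, hnodal, mul_one,
      zero_sub]
  rcases eq_or_ne P 0 with rfl | hP0
  · simpa using hlead
  have := hPnat hP0
  rw [← hlead, show #s + 2 = 3 + (#s - 1) by omega,
    coeff_mul_add_eq_of_natDegree_le hcube.le (by omega)]
  have hmonic := ((monic_X_sub_C x).pow 3).coeff_natDegree
  rw [hcube] at hmonic
  rw [hmonic, one_mul]

theorem sum_div_X_sub_C_pow_three_mul_derivative_nodal {s : Finset K} {f : K[X]} {x a b c : K}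
    (hx : x ∉ s) (hf : f.natDegree ≤ #s + 1)
    (hdvd : (X - C x) ^ 3 ∣
      f - (C a + C b * (X - C x) + C c * (X - C x) ^ 2) * Lagrange.nodal s id) :
    ∑ r ∈ s, f.eval r / ((r - x) ^ 3 * (Lagrange.nodal s id).derivative.eval r) = -c := by
  classical
  obtain ⟨P, hP⟩ := hdvd
  obtain ⟨hPdeg, hPcoeff⟩ := degree_lt_and_coeff_eq_of_X_sub_C_pow_three_mul_eq hf hP
  rw [← hPcoeff, Lagrange.coeff_eq_sum (v := id) (Set.injOn_id _) hPdeg]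
  refine sum_congr rfl fun r hr => ?_
  have hnode : (Lagrange.nodal s id).eval r = 0 :=
    Lagrange.eval_nodal_at_node (v := id) hr
  have hfr : f.eval r = (r - x) ^ 3 * P.eval r := by
    simpa [hnode] using congrArg (eval r) hP
  have hderiv : (Lagrange.nodal s id).derivative.eval r = ∏ j ∈ s.erase r, (r - j) := by
    simpa [Lagrange.eval_nodal] using Lagrange.eval_nodal_derivative_eval_node_eq (v := id) hr
  have hrx : (r - x) ^ 3 ≠ 0 := pow_ne_zero 3 (sub_ne_zero.mpr (ne_of_mem_of_not_mem hr hx))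
  rw [hfr, hderiv, mul_div_mul_left _ _ hrx]
  rfl

theorem pow_div_eval_derivative_mul_of_eval_eq_zero {u v : K[X]} {p q : ℕ} {z : K}
    (hu : u * (X - C 1) = X ^ p - 1) (hv : v * (X - C 1) = X ^ q - 1) (hz : u.eval z = 0)
    (hz1 : z ≠ 1) (hzq : z ^ q ≠ 1) (hp : (p : K) ≠ 0) (m : ℕ) :
    z ^ m / ((z - 1) ^ 3 * (u * v).derivative.eval z) =
      1 / p * (z ^ (m + 1) / ((1 - z ^ q) * (1 - z))) := by
  have hzp : z ^ p = 1 := by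
    have := congrArg (eval z) hu
    simp only [eval_mul, hz, zero_mul, eval_sub, eval_pow, eval_X, eval_one] at this
    linear_combination -this
  have hzp' : z * z ^ (p - 1) = 1 := by
    rw [← pow_succ', Nat.sub_add_cancel (Nat.pos_of_ne_zero (by rintro rfl; simp at hp)), hzp]
  have hdu : (z - 1) * u.derivative.eval z = p * z ^ (p - 1) := by
    have := congrArg (fun f => (derivative f).eval z) hu
    simp only [derivative_mul, derivative_sub, derivative_X, derivative_C, derivative_X_pow,
      derivative_one, eval_add, eval_mul, eval_sub, eval_X, eval_C, eval_pow, eval_one, hz,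
      eval_zero] at this
    linear_combination this
  have hvz : (z - 1) * v.eval z = z ^ q - 1 := by
    have := congrArg (eval z) hv
    simp only [eval_mul, eval_sub, eval_pow, eval_X, eval_C, eval_one] at this
    linear_combination this
  have hden : z * ((z - 1) ^ 3 * (u * v).derivative.eval z) = (z - 1) * p * (z ^ q - 1) := by
    rw [derivative_mul, eval_add, eval_mul, eval_mul, hz, zero_mul, add_zero]
    linear_combination (z - 1) * (z ^ q - 1) * p * hzp' + z * (z - 1) ^ 2 * v.eval z * hdu
      + z * (z - 1) * p * z ^ (p - 1) * hvz
  have h1 : (1 : K) - z ≠ 0 := sub_ne_zero.mpr hz1.symm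
  have hq1 : (1 : K) - z ^ q ≠ 0 := sub_ne_zero.mpr (Ne.symm hzq)
  have hz0 : z ≠ 0 := left_ne_zero_of_mul_eq_one hzp'
  rw [← mul_div_mul_left _ _ hz0, hden, ← pow_succ']
  field_simp
  ring

end Field

section RootsOfUnity

variable {K : Type*} [Field K] [DecidableEq K] {ζ : K} {p q : ℕ}

theorem nodal_nthRootsFinset_erase_one_mul_X_sub_one (hζ : IsPrimitiveRoot ζ p) (hp : 0 < p) :
    Lagrange.nodal ((nthRootsFinset p (1 : K)).erase 1) id * (X - C 1) = X ^ p - 1 := by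
  rw [X_pow_sub_one_eq_prod hp hζ, ← mul_prod_erase _ _ (one_mem_nthRootsFinset hp), mul_comm,
    Lagrange.nodal_eq]
  rfl

theorem card_nthRootsFinset_erase_one (hζ : IsPrimitiveRoot ζ p) (hp : 0 < p) :
    #((nthRootsFinset p (1 : K)).erase 1) = p - 1 := by
  rw [card_erase_of_mem (one_mem_nthRootsFinset hp), hζ.card_nthRootsFinset]

theorem pow_ne_one_of_mem_nthRootsFinset_erase_one (hp : 0 < p) (hpq : p.Coprime q) {z : K}
    (hz : z ∈ (nthRootsFinset p (1 : K)).erase 1) : z ^ q ≠ 1 := fun hzq =>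
  (mem_erase.mp hz).1 <| (pow_eq_one_iff_of_coprime hpq).mp
    ⟨(mem_nthRootsFinset hp 1).mp (mem_erase.mp hz).2, hzq⟩

theorem disjoint_nthRootsFinset_erase_one (hp : 0 < p) (hq : 0 < q) (hpq : p.Coprime q) :
    Disjoint ((nthRootsFinset p (1 : K)).erase 1) ((nthRootsFinset q (1 : K)).erase 1) :=
  disjoint_left.mpr fun _ hzp hzq =>
    pow_ne_one_of_mem_nthRootsFinset_erase_one hp hpq hzp
      ((mem_nthRootsFinset hq 1).mp (mem_erase.mp hzq).2)

theorem sum_nthRootsFinset_erase_one_pow_div [CharZero K] {v : K[X]} (hζ : IsPrimitiveRoot ζ p)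
    (hp : 0 < p) (hpq : p.Coprime q) (hv : v * (X - C 1) = X ^ q - 1) (m : ℕ) :
    ∑ z ∈ (nthRootsFinset p (1 : K)).erase 1, z ^ m /
        ((z - 1) ^ 3 * (Lagrange.nodal ((nthRootsFinset p (1 : K)).erase 1) id * v).derivative.eval z) =
      1 / p * ∑ z ∈ (nthRootsFinset p (1 : K)).erase 1, z ^ (m + 1) / ((1 - z ^ q) * (1 - z)) := by
  rw [mul_sum]
  refine sum_congr rfl fun z hz => ?_
  exact pow_div_eval_derivative_mul_of_eval_eq_zero
    (nodal_nthRootsFinset_erase_one_mul_X_sub_one hζ hp) hv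
    (Lagrange.eval_nodal_at_node (v := id) hz) (mem_erase.mp hz).1
    (pow_ne_one_of_mem_nthRootsFinset_erase_one hp hpq hz) (Nat.cast_ne_zero.mpr hp.ne') m

end RootsOfUnity

end Polynomial

theorem gessel_reciprocity (p q n : ℕ) (hp : 0 < p) (hq : 0 < q)
    (hpq : Nat.Coprime p q) (hn : 1 ≤ n) (hn' : n ≤ p + q) :
    (1 / p : ℂ) * ∑ z ∈ (nthRootsFinset p (1 : ℂ)).erase 1,
        z ^ n / ((1 - z ^ q) * (1 - z)) +
      (1 / q : ℂ) * ∑ z ∈ (nthRootsFinset q (1 : ℂ)).erase 1,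
        z ^ n / ((1 - z ^ p) * (1 - z)) =
      -(n ^ 2 : ℂ) / (2 * p * q) + (n / 2 : ℂ) * (1 / p + 1 / q + 1 / (p * q)) -
        (1 / 4 : ℂ) * (1 / p + 1 / q + 1) -
        (1 / 12 : ℂ) * ((p : ℂ) / q + 1 / (p * q) + (q : ℂ) / p) := by
  obtain ⟨m, rfl⟩ : ∃ m, n = m + 1 := ⟨n - 1, by omega⟩
  set Sp := (nthRootsFinset p (1 : ℂ)).erase 1
  set Sq := (nthRootsFinset q (1 : ℂ)).erase 1
  have hζp := Complex.isPrimitiveRoot_exp p hp.ne'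
  have hζq := Complex.isPrimitiveRoot_exp q hq.ne'
  have hu := nodal_nthRootsFinset_erase_one_mul_X_sub_one hζp hp
  have hv := nodal_nthRootsFinset_erase_one_mul_X_sub_one hζq hq
  have hdisj : Disjoint Sp Sq := disjoint_nthRootsFinset_erase_one hp hq hpq
  have hnodal : Lagrange.nodal (Sp ∪ Sq) id = Lagrange.nodal Sp id * Lagrange.nodal Sq id :=
    prod_union hdisj
  have hres := sum_div_X_sub_C_pow_three_mul_derivative_nodal (s := Sp ∪ Sq) (f := X ^ m)
    (by simp [Sp, Sq])
    (by rw [natDegree_X_pow, card_union_of_disjoint hdisj, card_nthRootsFinset_erase_one hζp hp,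
      card_nthRootsFinset_erase_one hζq hq]; omega)
    (hnodal ▸ X_sub_one_pow_three_dvd_X_pow_sub_mul hp hq hu hv m)
  simp only [eval_pow, eval_X] at hres
  rw [sum_union hdisj, hnodal, sum_nthRootsFinset_erase_one_pow_div hζp hp hpq hv,
    mul_comm (Lagrange.nodal Sp id), sum_nthRootsFinset_erase_one_pow_div hζq hq hpq.symm hu,
    neg_neg] at hres
  simpa [gesselQuadratic] using hres
end

section
/- Let $a$ and $b$ be coprime positive integers and $n$ a positive integer. Then the number of ways to write $n = k_0 a + k_1 b$ with $k_0, k_1 \in \mathbb{Z}_{\geq 0}$ equals $\frac{n}{ab} + \frac{1}{2}\left(\frac{1}{a} + \frac{1}{b}\right) + \frac{1}{a}\sum_{\lambda^a=1,\lambda\neq 1} \frac{\lambda^{-n}}{1-\lambda^b} + \frac{1}{b}\sum_{\lambda^b=1,\lambda\neq 1} \frac{\lambda^{-n}}{1-\lambda^a}$ (Popoviciu-type formula via Fourier-Dedekind sums). -/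
open Finset Polynomial

/-!
Let `r ∈ [0, a)` solve `b r ≡ n (mod a)` and `s ∈ [0, b)` solve `a s ≡ n (mod b)`. Then
`n + a b = b r + a s + a b c` with `c ∈ ℕ`, and the representations of `n` are exactly
`(k₀, k₁) = (s + b u, r + a t)` with `u + t + 1 = c`; so there are
`c = n / (a b) + 1 - r / a - s / b` of them.

On the other side, `z ↦ z ^ b` permutes the nontrivial `a`-th roots of unity and turns
`z⁻ⁿ / (1 - z ^ b)` into `w⁻ʳ / (1 - w)`, and `∑_{w ≠ 1} w⁻ᵏ / (1 - w) = (a - 1) / 2 - k` for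
`k < a`: for `k = 0` pair `w` with `w⁻¹`, and raising `k` by one adds `∑_{w ≠ 1} w⁻ᵏ⁻¹ = -1`.
-/

theorem Nat.card_subtype_add_add_one_eq (c : ℕ) :
    Nat.card {p : ℕ × ℕ // p.1 + p.2 + 1 = c} = c := by
  cases c with
  | zero => simp
  | succ m =>
    have : ∀ p : ℕ × ℕ, p.1 + p.2 + 1 = m + 1 ↔ p ∈ antidiagonal m := by simp
    simp_rw [this]
    rw [Nat.card_eq_finsetCard, Finset.Nat.card_antidiagonal]

theorem Nat.mod_eq_of_mul_add_mul_eq {a b r n x y : ℕ} (hab : a.Coprime b) (hr : r < a)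
    (hrn : b * r ≡ n [MOD a]) (h : x * a + y * b = n) : y % a = r := by
  have hy : b * y ≡ b * r [MOD a] := calc
    b * y ≡ x * a + y * b [MOD a] := by simp [Nat.ModEq, mul_comm]
    _ = n := h
    _ ≡ b * r [MOD a] := hrn.symm
  rw [← Nat.mod_eq_of_lt hr]
  exact Nat.ModEq.cancel_left_of_coprime hab hy

section Representations

variable {a b n r s c : ℕ}

theorem modEq_of_add_mul_eq (hc : n + a * b = b * r + a * s + a * b * c) :
    b * r ≡ n [MOD a] := by
  have h := congrArg (· % a) (show n + a * b = b * r + a * (s + b * c) by rw [hc]; ring)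
  simpa [Nat.ModEq] using h.symm

theorem exists_add_mul_eq_of_modEq (hab : a.Coprime b) (hr : r < a) (hs : s < b)
    (hra : b * r ≡ n [MOD a]) (hsb : a * s ≡ n [MOD b]) :
    ∃ c, n + a * b = b * r + a * s + a * b * c := by
  have hdvd_a : (a : ℤ) ∣ n + a * b - b * r - a * s := by
    rw [show (n + a * b - b * r - a * s : ℤ) = (n - b * r) + a * (b - s) by ring]
    exact dvd_add (by exact_mod_cast Nat.modEq_iff_dvd.mp hra) (dvd_mul_right _ _)
  have hdvd_b : (b : ℤ) ∣ n + a * b - b * r - a * s := by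
    rw [show (n + a * b - b * r - a * s : ℤ) = (n - a * s) + b * (a - r) by ring]
    exact dvd_add (by exact_mod_cast Nat.modEq_iff_dvd.mp hsb) (dvd_mul_right _ _)
  obtain ⟨q, hq⟩ := (Nat.isCoprime_iff_coprime.mpr hab).mul_dvd hdvd_a hdvd_b
  have hq_nonneg : 0 ≤ q := by
    have hbr : b * r ≤ a * b := by rw [mul_comm a]; exact Nat.mul_le_mul_left b hr.le
    have has : a * s < a * b := Nat.mul_lt_mul_of_pos_left hs (by omega)
    have hpos : 0 < (a * b : ℤ) * (q + 1) := by rw [mul_add_one, ← hq]; linarith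
    have := pos_of_mul_pos_right hpos (by positivity)
    omega
  lift q to ℕ using hq_nonneg
  exact ⟨q, by zify; linarith⟩

theorem card_representations_eq (hab : a.Coprime b) (ha : 0 < a) (hb : 0 < b) (hr : r < a)
    (hs : s < b) (hc : n + a * b = b * r + a * s + a * b * c) :
    Nat.card {k : ℕ × ℕ // k.1 * a + k.2 * b = n} = c := by
  have hshift (u t : ℕ) : (s + b * u) * a + (r + a * t) * b = n ↔ u + t + 1 = c := calc
    (s + b * u) * a + (r + a * t) * b = n
        ↔ b * r + a * s + a * b * (u + t + 1) = b * r + a * s + a * b * c := by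
      rw [← hc, show b * r + a * s + a * b * (u + t + 1)
        = (s + b * u) * a + (r + a * t) * b + a * b by ring, add_left_inj]
    _ ↔ u + t + 1 = c := by rw [add_right_inj, Nat.mul_left_cancel_iff (Nat.mul_pos ha hb)]
  have hra : b * r ≡ n [MOD a] := modEq_of_add_mul_eq hc
  have hsb : a * s ≡ n [MOD b] :=
    modEq_of_add_mul_eq (r := s) (s := r) (c := c) (by rw [mul_comm b a, hc]; ring)
  have hdecomp : ∀ k : {k : ℕ × ℕ // k.1 * a + k.2 * b = n},
      s + b * (k.1.1 / b) = k.1.1 ∧ r + a * (k.1.2 / a) = k.1.2 := fun ⟨(x, y), h⟩ =>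
    ⟨Nat.mod_eq_of_mul_add_mul_eq hab.symm hs hsb (by rw [← h, add_comm]) ▸ Nat.mod_add_div x b,
      Nat.mod_eq_of_mul_add_mul_eq hab hr hra h ▸ Nat.mod_add_div y a⟩
  let e : {k : ℕ × ℕ // k.1 * a + k.2 * b = n} ≃ {p : ℕ × ℕ // p.1 + p.2 + 1 = c} :=
    { toFun k := ⟨(k.1.1 / b, k.1.2 / a), by rw [← hshift, (hdecomp k).1, (hdecomp k).2]; exact k.2⟩
      invFun p := ⟨(s + b * p.1.1, r + a * p.1.2), (hshift _ _).mpr p.2⟩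
      left_inv k := by ext <;> simp [(hdecomp k).1, (hdecomp k).2]
      right_inv p := by ext <;> simp [Nat.add_mul_div_left, Nat.div_eq_of_lt, hr, hs, ha, hb] }
  rw [Nat.card_congr e, Nat.card_subtype_add_add_one_eq]

end Representations

def residueDiv (a b n : ℕ) : ℕ := ((n : ZMod a) * (b : ZMod a)⁻¹).val

theorem residueDiv_lt {a : ℕ} (ha : 0 < a) (b n : ℕ) : residueDiv a b n < a :=
  have : NeZero a := ⟨ha.ne'⟩
  ZMod.val_lt _

theorem mul_residueDiv_modEq {a b : ℕ} (ha : 0 < a) (hab : a.Coprime b) (n : ℕ) :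
    b * residueDiv a b n ≡ n [MOD a] := by
  have : NeZero a := ⟨ha.ne'⟩
  rw [← ZMod.natCast_eq_natCast_iff, Nat.cast_mul, residueDiv, ZMod.natCast_zmod_val,
    mul_left_comm, ZMod.coe_mul_inv_eq_one b hab.symm, mul_one]

section RootsOfUnity

variable {K : Type*} [Field K] [DecidableEq K] {a : ℕ} {ζ : K}

theorem mem_erase_one_nthRootsFinset (ha : 0 < a) {z : K} :
    z ∈ (nthRootsFinset a (1 : K)).erase 1 ↔ z ≠ 1 ∧ z ^ a = 1 := by
  rw [mem_erase, Polynomial.mem_nthRootsFinset ha]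

theorem IsPrimitiveRoot.nthRootsFinset_eq_image_pow (hζ : IsPrimitiveRoot ζ a) (ha : 0 < a) :
    nthRootsFinset a (1 : K) = (range a).image (ζ ^ ·) := by
  have : NeZero a := ⟨ha.ne'⟩
  ext z
  simp only [Polynomial.mem_nthRootsFinset ha, mem_image, mem_range]
  exact ⟨hζ.eq_pow_of_pow_eq_one, fun ⟨i, _, hi⟩ => by
    rw [← hi, pow_right_comm, hζ.pow_eq_one, one_pow]⟩

theorem IsPrimitiveRoot.sum_nthRootsFinset_zpow_eq_zero (hζ : IsPrimitiveRoot ζ a) (ha : 0 < a)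
    {j : ℤ} (hj : ¬ (a : ℤ) ∣ j) : ∑ z ∈ nthRootsFinset a (1 : K), z ^ j = 0 := by
  have hζj : ζ ^ j - 1 ≠ 0 := sub_ne_zero.mpr fun h => hj ((hζ.zpow_eq_one_iff_dvd j).mp h)
  rw [hζ.nthRootsFinset_eq_image_pow ha, sum_image fun i hi k hk h =>
    hζ.pow_inj (mem_range.mp hi) (mem_range.mp hk) h]
  have hgeom : (∑ i ∈ range a, (ζ ^ j) ^ i) * (ζ ^ j - 1) = 0 := by
    rw [geom_sum_mul, ← zpow_natCast, ← zpow_mul, mul_comm, zpow_mul, zpow_natCast,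
      hζ.pow_eq_one, one_zpow, sub_self]
  simpa only [← zpow_natCast, ← zpow_mul, mul_comm j, hζj, or_false, mul_eq_zero] using hgeom

theorem sum_erase_one_nthRootsFinset_comp_pow {M : Type*} [AddCommMonoid M] (ha : 0 < a)
    {b : ℕ} (hab : a.Coprime b) (f : K → M) :
    ∑ z ∈ (nthRootsFinset a (1 : K)).erase 1, f (z ^ b) =
      ∑ z ∈ (nthRootsFinset a (1 : K)).erase 1, f z := by
  set c := residueDiv a b 1
  have hbc : b * c ≡ 1 [MOD a] := mul_residueDiv_modEq ha hab 1
  have hcb : c * b ≡ 1 [MOD a] := by rwa [mul_comm]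
  have hinv {z : K} {d e : ℕ} (h : d * e ≡ 1 [MOD a]) (hz : z ^ a = 1) : (z ^ d) ^ e = z := by
    rw [← pow_mul, pow_eq_pow_of_modEq h hz, pow_one]
  have hmaps {z : K} {d e : ℕ} (h : d * e ≡ 1 [MOD a])
      (hz : z ∈ (nthRootsFinset a (1 : K)).erase 1) :
      z ^ d ∈ (nthRootsFinset a (1 : K)).erase 1 := by
    rw [mem_erase_one_nthRootsFinset ha] at hz ⊢
    refine ⟨fun h1 => hz.1 ?_, by rw [pow_right_comm, hz.2, one_pow]⟩
    rw [← hinv h hz.2, h1, one_pow]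
  exact sum_nbij' (· ^ b) (· ^ c) (fun z hz => hmaps hbc hz) (fun z hz => hmaps hcb hz)
    (fun z hz => hinv hbc ((mem_erase_one_nthRootsFinset ha).mp hz).2)
    (fun z hz => hinv hcb ((mem_erase_one_nthRootsFinset ha).mp hz).2) (fun _ _ => rfl)

theorem sum_erase_one_nthRootsFinset_one_div_one_sub [NeZero (2 : K)]
    (hζ : IsPrimitiveRoot ζ a) (ha : 0 < a) :
    ∑ z ∈ (nthRootsFinset a (1 : K)).erase 1, 1 / (1 - z) = ((a : K) - 1) / 2 := by
  set S := ∑ z ∈ (nthRootsFinset a (1 : K)).erase 1, 1 / (1 - z)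
  have hS : S = (a - 1 : ℕ) - S := calc
    S = ∑ z ∈ (nthRootsFinset a (1 : K)).erase 1, 1 / (1 - z ^ (a - 1)) :=
      (sum_erase_one_nthRootsFinset_comp_pow ha
        ((Nat.coprime_self_sub_right ha).mpr (Nat.coprime_one_right a)) _).symm
    _ = ∑ z ∈ (nthRootsFinset a (1 : K)).erase 1, (1 - 1 / (1 - z)) := by
      refine sum_congr rfl fun z hz => ?_
      obtain ⟨hz1, hza⟩ := (mem_erase_one_nthRootsFinset ha).mp hz
      have hz0 : z ≠ 0 := ne_zero_of_mem_nthRootsFinset one_ne_zero (mem_of_mem_erase hz)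
      have : 1 - z ≠ 0 := sub_ne_zero.mpr (Ne.symm hz1)
      have : 1 - z⁻¹ ≠ 0 := sub_ne_zero.mpr (Ne.symm (inv_ne_one.mpr hz1))
      have hinv : z ^ (a - 1) = z⁻¹ :=
        eq_inv_of_mul_eq_one_left (by rw [← pow_succ, Nat.sub_add_cancel ha, hza])
      rw [hinv]
      field_simp
      ring
    _ = (a - 1 : ℕ) - S := by
      rw [sum_sub_distrib, sum_const, card_erase_of_mem (one_mem_nthRootsFinset ha),
        hζ.card_nthRootsFinset, nsmul_one]
  rw [Nat.cast_pred ha] at hS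
  rw [eq_div_iff two_ne_zero]
  linear_combination hS

theorem sum_erase_one_nthRootsFinset_zpow_neg_div_one_sub [NeZero (2 : K)]
    (hζ : IsPrimitiveRoot ζ a) {k : ℕ} (hk : k < a) :
    ∑ z ∈ (nthRootsFinset a (1 : K)).erase 1, z ^ (-(k : ℤ)) / (1 - z) =
      ((a : K) - 1) / 2 - k := by
  have ha : 0 < a := by omega
  induction k with
  | zero => simpa using sum_erase_one_nthRootsFinset_one_div_one_sub hζ ha
  | succ k ih =>
    have hpow : ∑ z ∈ (nthRootsFinset a (1 : K)).erase 1, z ^ (-(k + 1 : ℤ)) = -1 := by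
      have hndvd : ¬ (a : ℤ) ∣ -(k + 1 : ℤ) := by
        rw [Int.dvd_neg]
        exact_mod_cast fun h => (Nat.le_of_dvd k.succ_pos h).not_gt hk
      rw [sum_erase_eq_sub (one_mem_nthRootsFinset ha), one_zpow,
        hζ.sum_nthRootsFinset_zpow_eq_zero ha hndvd, zero_sub]
    have hstep : ∀ z ∈ (nthRootsFinset a (1 : K)).erase 1,
        z ^ (-((k + 1 : ℕ) : ℤ)) / (1 - z) = z ^ (-(k : ℤ)) / (1 - z) + z ^ (-(k + 1 : ℤ)) := by
      intro z hz
      have hz0 : z ≠ 0 := ne_zero_of_mem_nthRootsFinset one_ne_zero (mem_of_mem_erase hz)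
      have : 1 - z ≠ 0 := sub_ne_zero.mpr (ne_of_mem_erase hz).symm
      rw [Nat.cast_succ, neg_add', zpow_sub_one₀ hz0]
      field_simp
      ring
    rw [sum_congr rfl hstep, sum_add_distrib, ih (by omega), hpow]
    push_cast
    ring

theorem sum_erase_one_nthRootsFinset_zpow_neg_div_one_sub_pow [NeZero (2 : K)]
    (hζ : IsPrimitiveRoot ζ a) (ha : 0 < a) {b : ℕ} (hab : a.Coprime b) (n : ℕ) :
    ∑ z ∈ (nthRootsFinset a (1 : K)).erase 1, z ^ (-(n : ℤ)) / (1 - z ^ b) =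
      ((a : K) - 1) / 2 - residueDiv a b n := by
  rw [← sum_erase_one_nthRootsFinset_zpow_neg_div_one_sub hζ (residueDiv_lt ha b n),
    ← sum_erase_one_nthRootsFinset_comp_pow ha hab
      fun w => w ^ (-(residueDiv a b n : ℤ)) / (1 - w)]
  refine sum_congr rfl fun z hz => ?_
  rw [zpow_neg, zpow_neg, zpow_natCast, zpow_natCast, ← pow_mul,
    pow_eq_pow_of_modEq (mul_residueDiv_modEq ha hab n).symm
      ((mem_erase_one_nthRootsFinset ha).mp hz).2]

end RootsOfUnity

theorem popoviciu_general (a b : ℕ) (ha : 0 < a) (hb : 0 < b) (hab : Nat.Coprime a b)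
    (n : ℕ) :
    (Nat.card {k : ℕ × ℕ // k.1 * a + k.2 * b = n} : ℂ) =
      (n : ℂ) / (a * b) + (1 / 2) * (1 / a + 1 / b) +
        (1 / a) * ∑ z ∈ (nthRootsFinset a (1 : ℂ)).erase 1,
          z ^ (-(n : ℤ)) / (1 - z ^ b) +
        (1 / b) * ∑ z ∈ (nthRootsFinset b (1 : ℂ)).erase 1,
          z ^ (-(n : ℤ)) / (1 - z ^ a) := by
  obtain ⟨c, hc⟩ := exists_add_mul_eq_of_modEq hab (residueDiv_lt ha b n)
    (residueDiv_lt hb a n) (mul_residueDiv_modEq ha hab n) (mul_residueDiv_modEq hb hab.symm n)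
  rw [card_representations_eq hab ha hb (residueDiv_lt ha b n) (residueDiv_lt hb a n) hc,
    sum_erase_one_nthRootsFinset_zpow_neg_div_one_sub_pow
      (Complex.isPrimitiveRoot_exp a ha.ne') ha hab,
    sum_erase_one_nthRootsFinset_zpow_neg_div_one_sub_pow
      (Complex.isPrimitiveRoot_exp b hb.ne') hb hab.symm]
  have hcC : (n : ℂ) + a * b = b * residueDiv a b n + a * residueDiv b a n + a * b * c := by
    exact_mod_cast hc
  have : (a : ℂ) ≠ 0 := by exact_mod_cast ha.ne'
  have : (b : ℂ) ≠ 0 := by exact_mod_cast hb.ne'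
  field_simp
  linear_combination -2 * hcC

theorem popoviciu (a b : ℕ) (ha : 0 < a) (hb : 0 < b) (hab : Nat.Coprime a b)
    (n : ℕ) (hn : 0 < n) :
    (Nat.card {k : ℕ × ℕ // k.1 * a + k.2 * b = n} : ℂ) =
      (n : ℂ) / (a * b) + (1 / 2) * (1 / a + 1 / b) +
        (1 / a) * ∑ z ∈ (nthRootsFinset a (1 : ℂ)).erase 1,
          z ^ (-(n : ℤ)) / (1 - z ^ b) +
        (1 / b) * ∑ z ∈ (nthRootsFinset b (1 : ℂ)).erase 1,
          z ^ (-(n : ℤ)) / (1 - z ^ a) :=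
  popoviciu_general a b ha hb hab n
end

section
/- Let $a_0, \dots, a_d$ be pairwise coprime positive integers and let $0 < n < a_0 + \cdots + a_d$. Then $\sum_{j=0}^d \sigma_n(a_0, \dots, \hat{a_j}, \dots, a_d; a_j) = -q(a_0, \dots, a_d, -n)$, where $q$ is the polynomial in $n$ given by the principal-part coefficients of $z^{-n}\prod_{j=0}^d(1-z^{a_j})^{-1}$ at $z=1$ (reciprocity law for Fourier-Dedekind sums). -/
open Finset Polynomial Filter

/-- The Fourier-Dedekind sum `σ_n(a_0,…,â_j,…,a_d; a_j)`. -/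
noncomputable def fourierDedekindOmit {d : ℕ} (n : ℤ) (a : Fin (d + 1) → ℕ)
    (j : Fin (d + 1)) : ℂ :=
  (1 / (a j : ℂ)) * ∑ z ∈ (nthRootsFinset (a j) (1 : ℂ)).erase 1,
    z ^ n / ∏ i ∈ Finset.univ.erase j, (1 - z ^ (a i))

/-!
The rational function `f z = z ^ n / ∏ j, (1 - z ^ a j)` vanishes at infinity because
`n < ∑ j, a j`. Its poles are `1`, with principal part `∑ k, B k / (z - 1) ^ k`, and the
nontrivial `a j`-th roots of unity `t`, which are simple poles because the `a j` are pairwise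
coprime, with residue `-t ^ (n + 1) / (a j * ∏ i ≠ j, (1 - t ^ a i))`. Subtracting all principal
parts leaves an entire function vanishing at infinity, hence zero by Liouville. Evaluating at
`z = 0`, where `f 0 = 0` since `n > 0`, the simple poles contribute exactly the Fourier-Dedekind
sums and the pole at `1` contributes `∑ k, (-1) ^ k * B k`.
-/

open Bornology Asymptotics
open scoped Topology

section

variable {𝕜 : Type*} [NontriviallyNormedField 𝕜]

theorem tendsto_sub_mul_nhdsNE_zero {h : 𝕜 → 𝕜} {t : 𝕜} (hc : ContinuousAt h t) :
    Tendsto (fun z => (z - t) * h z) (𝓝[≠] t) (𝓝 0) := by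
  have : Tendsto (fun z => (z - t) * h z) (𝓝 t) (𝓝 ((t - t) * h t)) :=
    ((continuous_sub_right t).continuousAt.mul hc).tendsto
  simpa using this.mono_left nhdsWithin_le_nhds

theorem isLittleO_sub_inv_of_tendsto_sub_mul {g : 𝕜 → 𝕜} {t : 𝕜}
    (h : Tendsto (fun z => (z - t) * g z) (𝓝[≠] t) (𝓝 0)) :
    (fun z => g z - g t) =o[𝓝[≠] t] fun z => (z - t)⁻¹ := by
  refine isLittleO_of_tendsto' ?_ ?_
  · filter_upwards [self_mem_nhdsWithin] with z (hz : z ≠ t) h0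
    exact absurd (inv_eq_zero.mp h0) (sub_ne_zero.mpr hz)
  · simpa using (h.sub (tendsto_sub_mul_nhdsNE_zero (continuousAt_const (y := g t)))).congr
      fun z => by ring

theorem HasDerivAt.tendsto_sub_mul_inv {f : 𝕜 → 𝕜} {f' t : 𝕜} (hf : HasDerivAt f f' t)
    (ht : f t = 0) (hf' : f' ≠ 0) :
    Tendsto (fun z => (z - t) * (f z)⁻¹) (𝓝[≠] t) (𝓝 f'⁻¹) :=
  ((hasDerivAt_iff_tendsto_slope.mp hf).inv₀ hf').congr fun z => by
    rw [slope_def_field, ht, sub_zero, inv_div, div_eq_mul_inv]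

theorem tendsto_sub_mul_div_sub [DecidableEq 𝕜] (r s t : 𝕜) :
    Tendsto (fun z => (z - t) * (r / (z - s))) (𝓝[≠] t) (𝓝 (if s = t then r else 0)) := by
  split_ifs with hst
  · subst hst
    refine tendsto_const_nhds.congr' ?_
    filter_upwards [self_mem_nhdsWithin] with z (hz : z ≠ s)
    field_simp [sub_ne_zero.mpr hz]
  · exact tendsto_sub_mul_nhdsNE_zero <|
      continuousAt_const.div (continuousAt_id.sub continuousAt_const)
        (sub_ne_zero.mpr (Ne.symm hst))

theorem tendsto_sub_mul_sum_div_sub [DecidableEq 𝕜] {ι : Type*} (s : Finset ι) (r w : ι → 𝕜)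
    (t : 𝕜) :
    Tendsto (fun z => (z - t) * ∑ i ∈ s, r i / (z - w i)) (𝓝[≠] t)
      (𝓝 (∑ i ∈ s, if w i = t then r i else 0)) := by
  simp_rw [mul_sum]
  exact tendsto_finsetSum s fun i _ => tendsto_sub_mul_div_sub (r i) (w i) t

end

section

variable {𝕜 : Type*} [NormedField 𝕜]

theorem tendsto_div_sub_pow_cobounded (r s : 𝕜) {k : ℕ} (hk : k ≠ 0) :
    Tendsto (fun z => r / (z - s) ^ k) (cobounded 𝕜) (𝓝 0) := by
  have := ((tendsto_inv₀_cobounded.comp (tendsto_sub_const_cobounded s)).pow k).const_mul r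
  simpa [zero_pow hk, div_eq_mul_inv] using this

theorem tendsto_pow_mul_inv_prod_one_sub_pow_cobounded {ι : Type*} [Fintype ι] {a : ι → ℕ}
    (ha : ∀ i, 0 < a i) {n : ℕ} (hn : n < ∑ i, a i) :
    Tendsto (fun z : 𝕜 => z ^ n * (∏ i, (1 - z ^ a i))⁻¹) (cobounded 𝕜) (𝓝 0) := by
  set φ : 𝕜 → 𝕜 := fun w => w ^ (∑ i, a i - n) * ∏ i, (w ^ a i - 1)⁻¹
  have hφ : Tendsto φ (𝓝 0) (𝓝 0) := by
    have : ContinuousAt φ 0 := by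
      refine (continuousAt_pow _ _).mul (tendsto_finsetProd _ fun i _ => ?_)
      exact ((continuousAt_pow _ _).sub continuousAt_const).inv₀ (by simp [(ha i).ne'])
    simpa [φ, zero_pow (Nat.sub_ne_zero_of_lt hn)] using this.tendsto
  refine (hφ.comp tendsto_inv₀_cobounded).congr' ?_
  filter_upwards [(tendsto_norm_cobounded_atTop (E := 𝕜)).eventually_gt_atTop 0] with z hz
  have hz0 : z ≠ 0 := norm_pos_iff.mp hz
  have hprod : ∏ i, (1 - z ^ a i) = z ^ (∑ i, a i) * ∏ i, (z⁻¹ ^ a i - 1) := by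
    rw [← prod_pow_eq_pow_sum, ← prod_mul_distrib]
    refine prod_congr rfl fun i _ => ?_
    rw [mul_sub, ← mul_pow, mul_inv_cancel₀ hz0, one_pow, mul_one]
  have hsplit : z ^ (∑ i, a i) = z ^ n * z ^ (∑ i, a i - n) := by
    rw [← pow_add, Nat.add_sub_cancel' hn.le]
  simp only [φ, Function.comp_apply, hprod, hsplit, inv_pow, prod_inv_distrib]
  field_simp

end

namespace Complex

theorem eqOn_zero_of_removable_of_tendsto_cobounded {g : ℂ → ℂ} {T : Finset ℂ}
    (hd : DifferentiableOn ℂ g (↑T)ᶜ)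
    (hT : ∀ t ∈ T, Tendsto (fun z => (z - t) * g z) (𝓝[≠] t) (𝓝 0))
    (hinf : Tendsto g (cobounded ℂ) (𝓝 0)) : Set.EqOn g 0 (↑T)ᶜ := by
  classical
  set G : ℂ → ℂ := fun z => if z ∈ T then limUnder (𝓝[≠] z) g else g z
  have hGg : Set.EqOn G g (↑T)ᶜ := fun z hz => if_neg hz
  have hG : Differentiable ℂ G := by
    intro z
    by_cases hz : z ∈ T
    · have hs : (↑(T.erase z) : Set ℂ)ᶜ ∈ 𝓝 z :=
        (T.erase z).finite_toSet.isClosed.isOpen_compl.mem_nhds (by simp)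
      have hupd := differentiableOn_update_limUnder_of_isLittleO hs
        (hd.mono fun w ⟨hw, hwz⟩ hwT => hw (mem_erase.mpr ⟨hwz, hwT⟩))
        (isLittleO_sub_inv_of_tendsto_sub_mul (hT z hz))
      refine (hupd.differentiableAt hs).congr_of_eventuallyEq ?_
      filter_upwards [hs] with w hw
      rcases eq_or_ne w z with rfl | hwz
      · simp [G, hz]
      · simp_all [G]
    · have hs : (↑T : Set ℂ)ᶜ ∈ 𝓝 z := T.finite_toSet.isClosed.isOpen_compl.mem_nhds hz
      exact (hd.differentiableAt hs).congr_of_eventuallyEq (eventually_of_mem hs hGg)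
  have hGinf : Tendsto G (cocompact ℂ) (𝓝 0) := by
    rw [← Metric.cobounded_eq_cocompact]
    refine hinf.congr' (eventually_of_mem ?_ fun z hz => (hGg hz).symm)
    exact T.finite_toSet.isBounded.compl
  intro z hz
  rw [← hGg hz]
  exact hG.apply_eq_of_tendsto_cocompact z hGinf

end Complex

namespace FourierDedekind

variable {d : ℕ} (a : Fin (d + 1) → ℕ) (n : ℕ)

noncomputable def nontrivialRoots : Finset (Σ _ : Fin (d + 1), ℂ) :=
  univ.sigma fun j => (nthRootsFinset (a j) (1 : ℂ)).erase 1

noncomputable def poles : Finset ℂ := insert 1 ((nontrivialRoots a).image Sigma.snd)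

noncomputable def genFun (z : ℂ) : ℂ := z ^ n * (∏ j, (1 - z ^ a j))⁻¹

noncomputable def residue (j : Fin (d + 1)) (t : ℂ) : ℂ :=
  -t ^ (n + 1) / (a j * ∏ i ∈ univ.erase j, (1 - t ^ a i))

variable {a n}

theorem mem_nontrivialRoots (ha : ∀ i, 0 < a i) {p : Σ _ : Fin (d + 1), ℂ} :
    p ∈ nontrivialRoots a ↔ p.2 ≠ 1 ∧ p.2 ^ a p.1 = 1 := by
  simp [nontrivialRoots, mem_nthRootsFinset (ha p.1)]

theorem fst_eq_of_mem_nontrivialRoots (ha : ∀ i, 0 < a i)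
    (hcop : ∀ i j, i ≠ j → Nat.Coprime (a i) (a j)) {i j : Fin (d + 1)} {t : ℂ}
    (hp : ⟨i, t⟩ ∈ nontrivialRoots a) (ht : t ^ a j = 1) : i = j := by
  rw [mem_nontrivialRoots ha] at hp
  by_contra hij
  exact hp.1 ((pow_eq_one_iff_of_coprime (hcop i j hij)).mp ⟨hp.2, ht⟩)

theorem prod_erase_one_sub_pow_ne_zero (ha : ∀ i, 0 < a i)
    (hcop : ∀ i j, i ≠ j → Nat.Coprime (a i) (a j)) {j : Fin (d + 1)} {t : ℂ}
    (hp : ⟨j, t⟩ ∈ nontrivialRoots a) : ∏ i ∈ univ.erase j, (1 - t ^ a i) ≠ 0 :=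
  prod_ne_zero_iff.mpr fun i hi h =>
    ne_of_mem_erase hi (fst_eq_of_mem_nontrivialRoots ha hcop hp (by linear_combination -h)).symm

theorem prod_one_sub_pow_ne_zero (ha : ∀ i, 0 < a i) {z : ℂ} (hz : z ∉ poles a) :
    ∏ j, (1 - z ^ a j) ≠ 0 := by
  refine prod_ne_zero_iff.mpr fun j _ h => hz ?_
  by_cases hz1 : z = 1
  · exact hz1 ▸ mem_insert_self _ _
  · refine mem_insert_of_mem (mem_image.mpr ⟨⟨j, z⟩, ?_, rfl⟩)
    exact (mem_nontrivialRoots ha).mpr ⟨hz1, by linear_combination -h⟩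

theorem zero_notMem_poles (ha : ∀ i, 0 < a i) : (0 : ℂ) ∉ poles a := by
  simp [poles, mem_nontrivialRoots ha, (ha _).ne']

theorem fourierDedekindOmit_eq_sum_residue (ha : ∀ i, 0 < a i) (j : Fin (d + 1)) :
    fourierDedekindOmit n a j =
      ∑ t ∈ (nthRootsFinset (a j) (1 : ℂ)).erase 1, residue a n j t / (0 - t) := by
  rw [fourierDedekindOmit, mul_sum]
  refine sum_congr rfl fun t ht => ?_
  have ht0 : t ≠ 0 := by
    rintro rfl
    simp [mem_nthRootsFinset (ha j), (ha j).ne'] at ht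
  rw [residue, zpow_natCast, zero_sub, pow_succ]
  field_simp

theorem differentiableAt_genFun (ha : ∀ i, 0 < a i) {z : ℂ} (hz : z ∉ poles a) :
    DifferentiableAt ℂ (genFun a n) z :=
  (differentiableAt_pow n).mul
    ((DifferentiableAt.fun_finsetProd fun _ _ => (differentiableAt_const _).sub
      (differentiableAt_pow _)).inv (prod_one_sub_pow_ne_zero ha hz))

theorem tendsto_sub_mul_genFun_of_mem (ha : ∀ i, 0 < a i)
    (hcop : ∀ i j, i ≠ j → Nat.Coprime (a i) (a j)) {j : Fin (d + 1)} {t : ℂ}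
    (hp : ⟨j, t⟩ ∈ nontrivialRoots a) :
    Tendsto (fun z => (z - t) * genFun a n z) (𝓝[≠] t) (𝓝 (residue a n j t)) := by
  have ht := ((mem_nontrivialRoots ha).mp hp).2
  have ht0 : t ≠ 0 := by rintro rfl; simp [(ha j).ne'] at ht
  have hP := prod_erase_one_sub_pow_ne_zero ha hcop hp
  have hpole := ((hasDerivAt_pow (a j) t).const_sub 1).tendsto_sub_mul_inv
    (by rw [ht, sub_self]) (neg_ne_zero.mpr (mul_ne_zero (by exact_mod_cast (ha j).ne')
      (pow_ne_zero _ ht0)))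
  have hrest : ContinuousAt (fun z => z ^ n * (∏ i ∈ univ.erase j, (1 - z ^ a i))⁻¹) t :=
    (continuousAt_pow _ _).mul ((tendsto_finsetProd _ fun i _ =>
      continuousAt_const.sub (continuousAt_pow _ _)).inv₀ hP)
  convert hpole.mul (hrest.tendsto.mono_left nhdsWithin_le_nhds) using 2 with z
  · rw [genFun, ← mul_prod_erase univ _ (mem_univ j), mul_inv]
    ring
  · have htinv : t ^ (a j - 1) = t⁻¹ :=
      eq_inv_of_mul_eq_one_left (by rw [← pow_succ, Nat.sub_add_cancel (ha j), ht])
    rw [residue, htinv, pow_succ]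
    field_simp

theorem tendsto_sub_mul_genFun (ha : ∀ i, 0 < a i)
    (hcop : ∀ i j, i ≠ j → Nat.Coprime (a i) (a j)) {t : ℂ} (ht : t ≠ 1) :
    Tendsto (fun z => (z - t) * genFun a n z) (𝓝[≠] t)
      (𝓝 (∑ p ∈ nontrivialRoots a, if p.2 = t then residue a n p.1 p.2 else 0)) := by
  by_cases hroot : ∃ j, t ^ a j = 1
  · obtain ⟨j, hj⟩ := hroot
    have hp : ⟨j, t⟩ ∈ nontrivialRoots a := (mem_nontrivialRoots ha).mpr ⟨ht, hj⟩
    rw [sum_eq_single_of_mem _ hp fun q hq hqp => if_neg fun hqt => hqp ?_, if_pos rfl]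
    · exact tendsto_sub_mul_genFun_of_mem ha hcop hp
    · obtain ⟨i, s⟩ := q
      obtain rfl : s = t := hqt
      rw [fst_eq_of_mem_nontrivialRoots ha hcop hq hj]
  · push Not at hroot
    have hne : ∀ p ∈ nontrivialRoots a, p.2 ≠ t :=
      fun p hp hpt => hroot p.1 (hpt ▸ ((mem_nontrivialRoots ha).mp hp).2)
    rw [sum_eq_zero fun p hp => if_neg (hne p hp)]
    have hz : t ∉ poles a := by
      rw [poles, mem_insert, mem_image, not_or]
      exact ⟨ht, fun ⟨p, hp, hpt⟩ => hne p hp hpt⟩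
    exact tendsto_sub_mul_nhdsNE_zero (differentiableAt_genFun ha hz).continuousAt

theorem tendsto_sub_mul_genFun_sub_principalParts (ha : ∀ i, 0 < a i)
    (hcop : ∀ i j, i ≠ j → Nat.Coprime (a i) (a j)) {B : ℕ → ℂ} {L : ℂ}
    (hB : Tendsto (fun z => genFun a n z - ∑ k ∈ Icc 1 (d + 1), B k / (z - 1) ^ k)
      (𝓝[≠] 1) (𝓝 L)) (t : ℂ) :
    Tendsto (fun z => (z - t) * (genFun a n z - ∑ k ∈ Icc 1 (d + 1), B k / (z - 1) ^ k -
      ∑ p ∈ nontrivialRoots a, residue a n p.1 p.2 / (z - p.2))) (𝓝[≠] t) (𝓝 0) := by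
  have hΛ := tendsto_sub_mul_sum_div_sub (nontrivialRoots a)
    (fun p => residue a n p.1 p.2) Sigma.snd t
  by_cases ht1 : t = 1
  · subst ht1
    have hz1 : Tendsto (fun z : ℂ => z - 1) (𝓝[≠] 1) (𝓝 0) :=
      tendsto_sub_nhds_zero_iff.mpr (tendsto_id.mono_left nhdsWithin_le_nhds)
    rw [sum_eq_zero fun p hp => if_neg ((mem_nontrivialRoots ha).mp hp).1] at hΛ
    simpa using ((hz1.mul hB).sub hΛ).congr fun z => by ring
  · have hPB : ContinuousAt (fun z : ℂ => ∑ k ∈ Icc 1 (d + 1), B k / (z - 1) ^ k) t := by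
      have := sub_ne_zero.mpr ht1
      fun_prop (disch := positivity)
    have hF := tendsto_sub_mul_genFun ha hcop (n := n) ht1
    simpa using ((hF.sub (tendsto_sub_mul_nhdsNE_zero hPB)).sub hΛ).congr fun z => by ring

theorem genFun_eq_add_principalParts (ha : ∀ i, 0 < a i)
    (hcop : ∀ i j, i ≠ j → Nat.Coprime (a i) (a j)) (hn : n < ∑ j, a j) {B : ℕ → ℂ} {L : ℂ}
    (hB : Tendsto (fun z => genFun a n z - ∑ k ∈ Icc 1 (d + 1), B k / (z - 1) ^ k)
      (𝓝[≠] 1) (𝓝 L)) {z : ℂ} (hz : z ∉ poles a) :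
    genFun a n z = ∑ k ∈ Icc 1 (d + 1), B k / (z - 1) ^ k +
      ∑ p ∈ nontrivialRoots a, residue a n p.1 p.2 / (z - p.2) := by
  set PB := fun z : ℂ => ∑ k ∈ Icc 1 (d + 1), B k / (z - 1) ^ k
  set PΛ := fun z : ℂ => ∑ p ∈ nontrivialRoots a, residue a n p.1 p.2 / (z - p.2)
  suffices Set.EqOn (fun z => genFun a n z - PB z - PΛ z) 0 (↑(poles a))ᶜ by
    have hz0 : genFun a n z - PB z - PΛ z = 0 := this hz
    linear_combination hz0
  refine Complex.eqOn_zero_of_removable_of_tendsto_cobounded (fun w hw => ?_)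
    (fun t _ => tendsto_sub_mul_genFun_sub_principalParts ha hcop hB t) ?_
  · have hw1 : w - 1 ≠ 0 := sub_ne_zero.mpr fun h => hw (h ▸ mem_insert_self _ _)
    have hwΛ : ∀ p ∈ nontrivialRoots a, w - p.2 ≠ 0 :=
      fun p hp h => hw (sub_eq_zero.mp h ▸ mem_insert_of_mem (mem_image_of_mem _ hp))
    have hPB : DifferentiableAt ℂ PB w := by fun_prop (disch := positivity)
    have hPΛ : DifferentiableAt ℂ PΛ w := by fun_prop (disch := simp_all)
    exact (((differentiableAt_genFun ha hw).sub hPB).sub hPΛ).differentiableWithinAt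
  · have hPB : Tendsto PB (cobounded ℂ) (𝓝 0) := by
      simpa using tendsto_finsetSum (Icc 1 (d + 1)) fun k hk =>
        tendsto_div_sub_pow_cobounded (B k) 1 (by simp at hk; omega)
    have hPΛ : Tendsto PΛ (cobounded ℂ) (𝓝 0) := by
      simpa using tendsto_finsetSum (nontrivialRoots a) fun p _ =>
        tendsto_div_sub_pow_cobounded (residue a n p.1 p.2) p.2 one_ne_zero
    simpa [genFun] using
      ((tendsto_pow_mul_inv_prod_one_sub_pow_cobounded ha hn).sub hPB).sub hPΛ

end FourierDedekind

open FourierDedekind in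
theorem fourier_dedekind_reciprocity (d : ℕ) (a : Fin (d + 1) → ℕ)
    (ha : ∀ i, 0 < a i) (hcop : ∀ i j, i ≠ j → Nat.Coprime (a i) (a j))
    (n : ℕ) (hn : 0 < n) (hn' : n < ∑ j, a j)
    (B : ℕ → ℂ) (L : ℂ)
    (hB : Tendsto
      (fun z : ℂ => z ^ (n : ℕ) * (∏ j, (1 - z ^ (a j)))⁻¹ -
        ∑ k ∈ Finset.Icc 1 (d + 1), B k / (z - 1) ^ k)
      (nhdsWithin 1 {(1 : ℂ)}ᶜ) (nhds L)) :
    ∑ j, fourierDedekindOmit (n : ℤ) a j =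
      -∑ k ∈ Finset.Icc 1 (d + 1), (-1) ^ k * B k := by
  have h0 := genFun_eq_add_principalParts ha hcop hn' hB (zero_notMem_poles ha)
  have hgen : genFun a n 0 = 0 := by simp [genFun, hn.ne']
  have hPB : ∑ k ∈ Icc 1 (d + 1), B k / (0 - 1) ^ k = ∑ k ∈ Icc 1 (d + 1), (-1) ^ k * B k :=
    sum_congr rfl fun k _ => by
      rw [zero_sub, div_eq_mul_inv, ← inv_pow, inv_neg, inv_one, mul_comm]
  have hPΛ : ∑ p ∈ nontrivialRoots a, residue a n p.1 p.2 / (0 - p.2) =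
      ∑ j, fourierDedekindOmit (n : ℤ) a j := by
    rw [nontrivialRoots, sum_sigma]
    exact sum_congr rfl fun j _ => (fourierDedekindOmit_eq_sum_residue ha j).symm
  rw [hgen, hPB, hPΛ] at h0
  linear_combination -h0
end

section
/- Let $a_0, a_1, a_2$ be pairwise coprime positive integers. Then $s(a_0; a_1, a_2) + s(a_1; a_0, a_2) + s(a_2; a_0, a_1) = 1 - \frac{a_0^2 + a_1^2 + a_2^2}{3 a_0 a_1 a_2}$ (Zagier's reciprocity law in dimension 2). -/
open Finset

/-- Zagier's higher-dimensional Dedekind sum in dimension 2. -/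
noncomputable def zagierSum2 (a₀ a₁ a₂ : ℕ) : ℝ :=
  (-1 / a₀) * ∑ k ∈ Finset.Ico 1 a₀,
    Real.cot (Real.pi * k * a₁ / a₀) * Real.cot (Real.pi * k * a₂ / a₀)

/-!
Zagier's residue argument. For `n = a₀ + a₁ + a₂` consider `P / Q` with
`P = X ^ (n - 1) + X ^ (a₀ - 1) + X ^ (a₁ - 1) + X ^ (a₂ - 1)` and
`Q = (X ^ a₀ - 1) * (X ^ a₁ - 1) * (X ^ a₂ - 1)`. By pairwise coprimality its poles are simple
at the nontrivial `aᵢ`-th roots of unity and triple at `1`. At `exp (2πik / a₀)` the residue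
`P / Q'` is `-cot (πka₁ / a₀) * cot (πka₂ / a₀) / a₀`, so the simple poles contribute exactly
the three Dedekind sums. Since `P` and `Q` are monic of degrees `n - 1` and `n`, all residues
add up to `1`; the residue at `1` is `(a₀² + a₁² + a₂²) / (3 a₀ a₁ a₂)`.

Over a field the residue theorem becomes the partial fraction decomposition
`P = R * W + Q₀ * T`, with `Q = R * Q₀`, `Q₀` the product of `X - s` over the simple poles
and `deg T < deg R`, compared in the coefficient of `X ^ (n - 1)`. For `R = (X - 1) ^ 3` the
residue at `1` is `T.coeff 2`, which is determined by the Taylor expansions of `P` and `Q₀` at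
`1` up to order two.
-/

open Polynomial

section PartialFractions

variable {K : Type*} [Field K]

theorem prod_X_sub_C_dvd_of_eval_eq_zero {p : K[X]} {S : Finset K}
    (h : ∀ s ∈ S, p.eval s = 0) : ∏ s ∈ S, (X - C s) ∣ p :=
  Finset.prod_dvd_of_coprime
    (fun _ _ _ _ hst => isCoprime_X_sub_C_of_isUnit_sub (sub_ne_zero.2 hst).isUnit)
    fun s hs => dvd_iff_isRoot.2 (h s hs)

theorem eval_derivative_X_sub_C_mul (p : K[X]) (s : K) :
    (((X - C s) * p).derivative).eval s = p.eval s := by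
  simp [derivative_mul]

theorem prod_X_sub_C_dvd_sub_sum_residues [DecidableEq K] {R : K[X]} {S : Finset K}
    (hRS : ∀ s ∈ S, R.eval s ≠ 0) (P : K[X]) :
    ∏ s ∈ S, (X - C s) ∣ P - ∑ s ∈ S,
      C (P.eval s / (R * ∏ t ∈ S, (X - C t)).derivative.eval s) *
        (R * ∏ t ∈ S.erase s, (X - C t)) := by
  refine prod_X_sub_C_dvd_of_eval_eq_zero fun s hs => ?_
  have hsplit : R * ∏ t ∈ S, (X - C t) = (X - C s) * (R * ∏ t ∈ S.erase s, (X - C t)) := by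
    rw [← mul_prod_erase S _ hs]
    ring
  have hvanish : ∀ t ∈ S, t ≠ s → (R * ∏ u ∈ S.erase t, (X - C u)).eval s = 0 :=
    fun t _ hts => by
      rw [eval_mul, eval_prod, prod_eq_zero (mem_erase.2 ⟨hts.symm, hs⟩) (by simp), mul_zero]
  have hne : (R * ∏ u ∈ S.erase s, (X - C u)).eval s ≠ 0 := by
    rw [eval_mul, eval_prod]
    refine mul_ne_zero (hRS s hs) (prod_ne_zero_iff.2 fun t ht => ?_)
    simpa [sub_eq_zero, eq_comm] using (mem_erase.1 ht).1
  rw [eval_sub, eval_finsetSum, sum_eq_single_of_mem s hs fun t ht hts => by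
      rw [eval_mul, hvanish t ht hts, mul_zero],
    eval_mul, eval_C, hsplit, eval_derivative_X_sub_C_mul, div_mul_cancel₀ _ hne, sub_self]

theorem exists_residue_decomposition {R P : K[X]} {S : Finset K} (hR : R.Monic)
    (hR0 : 0 < R.natDegree) (hRS : ∀ s ∈ S, R.eval s ≠ 0)
    (hP : P.natDegree < (R * ∏ s ∈ S, (X - C s)).natDegree) :
    ∃ T : K[X], T.natDegree < R.natDegree ∧ R ∣ P - (∏ s ∈ S, (X - C s)) * T ∧
      P.coeff ((R * ∏ s ∈ S, (X - C s)).natDegree - 1) =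
        ∑ s ∈ S, P.eval s / (R * ∏ t ∈ S, (X - C t)).derivative.eval s +
          T.coeff (R.natDegree - 1) := by
  classical
  set Q₀ := ∏ s ∈ S, (X - C s)
  have hQ₀ : Q₀.Monic := monic_prod_X_sub_C _ S
  have hQ₀deg : Q₀.natDegree = #S := natDegree_finsetProd_X_sub_C_eq_card S id
  have hM : ∀ s ∈ S, (R * ∏ t ∈ S.erase s, (X - C t)).Monic ∧
      (R * ∏ t ∈ S.erase s, (X - C t)).natDegree = R.natDegree + #S - 1 := fun s hs => by
    refine ⟨hR.mul (monic_prod_X_sub_C _ _), ?_⟩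
    rw [hR.natDegree_mul (monic_prod_X_sub_C _ _), natDegree_finsetProd_X_sub_C_eq_card,
      card_erase_of_mem hs]
    have := card_pos.2 ⟨s, hs⟩
    omega
  rw [hR.natDegree_mul hQ₀, hQ₀deg] at hP ⊢
  obtain ⟨T, hT⟩ := prod_X_sub_C_dvd_sub_sum_residues hRS P
  have hT_deg : T.natDegree ≤ R.natDegree - 1 := by
    rcases eq_or_ne T 0 with rfl | hT0
    · simp
    have hH : (Q₀ * T).natDegree ≤ R.natDegree + #S - 1 := by
      rw [← hT]
      exact (natDegree_sub_le _ _).trans (max_le (Nat.le_sub_one_of_lt hP)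
        (natDegree_sum_le_of_forall_le _ _ fun s hs =>
          (natDegree_C_mul_le _ _).trans (hM s hs).2.le))
    rw [hQ₀.natDegree_mul' hT0, hQ₀deg] at hH
    omega
  refine ⟨T, by omega, ?_, ?_⟩
  · rw [← hT, sub_sub_cancel]
    exact dvd_sum fun s _ => dvd_mul_of_dvd_right (dvd_mul_right R _) _
  · have hidx : R.natDegree + #S - 1 = #S + (R.natDegree - 1) := by omega
    have hcoeff := congrArg (coeff · (R.natDegree + #S - 1)) hT
    simp only [coeff_sub, finsetSum_coeff] at hcoeff
    rw [Finset.sum_congr rfl fun s hs => by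
      rw [coeff_C_mul, ← (hM s hs).2, (hM s hs).1.coeff_natDegree, mul_one]] at hcoeff
    have hlead : Q₀.coeff #S = 1 := hQ₀deg ▸ hQ₀.coeff_natDegree
    rw [hidx, coeff_mul_add_eq_of_natDegree_le hQ₀deg.le hT_deg, hlead,
      one_mul] at hcoeff
    rw [hidx, ← hcoeff]
    ring

end PartialFractions

section Taylor

variable {R : Type*} [CommRing R]

theorem X_pow_dvd_taylor {r : R} {m : ℕ} {f : R[X]} (h : (X - C r) ^ m ∣ f) :
    X ^ m ∣ taylor r f := by
  obtain ⟨g, rfl⟩ := h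
  simp [taylor_mul, taylor_pow]

theorem coeff_taylor_of_natDegree_le {r : R} {f : R[X]} {n : ℕ} (hn : f.natDegree ≤ n) :
    (taylor r f).coeff n = f.coeff n := by
  rcases hn.eq_or_lt with rfl | hlt
  · exact coeff_taylor_natDegree r f
  · rw [coeff_eq_zero_of_natDegree_lt hlt,
      coeff_eq_zero_of_natDegree_lt (natDegree_taylor f r ▸ hlt)]

theorem coeff_taylor_one_X_pow (m k : ℕ) : (taylor (1 : R) (X ^ m)).coeff k = m.choose k := by
  rw [taylor_X_pow, map_one, coeff_X_add_one_pow]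

theorem coeff_taylor_one_geom_sum (m k : ℕ) :
    (taylor (1 : R) (∑ i ∈ range m, X ^ i)).coeff k = m.choose (k + 1) := by
  have h := congrArg (fun p => (taylor (1 : R) p).coeff (k + 1)) (geom_sum_mul (X : R[X]) m)
  simpa [taylor_mul, map_sub, coeff_X_add_one_pow, coeff_one, mul_comm] using h

theorem coeff_mul_one (f g : R[X]) :
    (f * g).coeff 1 = f.coeff 0 * g.coeff 1 + f.coeff 1 * g.coeff 0 := by
  rw [coeff_mul, Nat.sum_antidiagonal_eq_sum_range_succ (fun i j => f.coeff i * g.coeff j)]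
  simp [sum_range_succ]

theorem coeff_mul_two (f g : R[X]) :
    (f * g).coeff 2 = f.coeff 0 * g.coeff 2 + f.coeff 1 * g.coeff 1 + f.coeff 2 * g.coeff 0 := by
  rw [coeff_mul, Nat.sum_antidiagonal_eq_sum_range_succ (fun i j => f.coeff i * g.coeff j)]
  simp [sum_range_succ]

theorem coeff_two_of_X_pow_three_dvd_sub_mul {p q t : R[X]} (h : X ^ 3 ∣ p - q * t) :
    q.coeff 0 ^ 3 * t.coeff 2 = q.coeff 0 ^ 2 * p.coeff 2 - q.coeff 0 * q.coeff 1 * p.coeff 1 +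
      (q.coeff 1 ^ 2 - q.coeff 0 * q.coeff 2) * p.coeff 0 := by
  have hcoeff : ∀ k < 3, p.coeff k = (q * t).coeff k := fun k hk =>
    sub_eq_zero.1 (by simpa using X_pow_dvd_iff.1 h k hk)
  have e₀ := hcoeff 0 (by norm_num)
  have e₁ := hcoeff 1 (by norm_num)
  have e₂ := hcoeff 2 (by norm_num)
  rw [mul_coeff_zero] at e₀
  rw [coeff_mul_one] at e₁
  rw [coeff_mul_two] at e₂
  linear_combination (-(q.coeff 0) ^ 2) * e₂ + q.coeff 0 * q.coeff 1 * e₁ +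
    (q.coeff 0 * q.coeff 2 - q.coeff 1 ^ 2) * e₀

end Taylor

theorem Nat.cast_choose_three {K : Type*} [Field K] [CharZero K] (m : ℕ) :
    (m.choose 3 : K) = m * (m - 1) * (m - 2) / 6 := by
  induction m with
  | zero => simp
  | succ m ih =>
    rw [Nat.choose_succ_succ, Nat.cast_add, ih, Nat.cast_choose_two]
    push_cast
    ring

section ZagierPolynomials

variable {K : Type*} [Field K]

noncomputable def zagierNumerator (a b c : ℕ) : K[X] :=
  X ^ (a + b + c - 1) + X ^ (a - 1) + X ^ (b - 1) + X ^ (c - 1)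

noncomputable def zagierDenominator (a b c : ℕ) : K[X] :=
  (X ^ a - 1) * (X ^ b - 1) * (X ^ c - 1)

theorem zagierNumerator_swap (a b c : ℕ) :
    (zagierNumerator b a c : K[X]) = zagierNumerator a b c := by
  rw [zagierNumerator, zagierNumerator, add_comm b a]
  ring

theorem zagierNumerator_rotate (a b c : ℕ) :
    (zagierNumerator c a b : K[X]) = zagierNumerator a b c := by
  rw [zagierNumerator, zagierNumerator, add_rotate c a b]
  ring

theorem zagierDenominator_swap (a b c : ℕ) :
    (zagierDenominator b a c : K[X]) = zagierDenominator a b c := by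
  rw [zagierDenominator, zagierDenominator]
  ring

theorem zagierDenominator_rotate (a b c : ℕ) :
    (zagierDenominator c a b : K[X]) = zagierDenominator a b c := by
  rw [zagierDenominator, zagierDenominator]
  ring

theorem natDegree_zagierNumerator_le (a b c : ℕ) :
    (zagierNumerator a b c : K[X]).natDegree ≤ a + b + c - 1 := by
  unfold zagierNumerator
  compute_degree
  all_goals omega

theorem coeff_zagierNumerator {a b c : ℕ} (hb : 0 < b) (hc : 0 < c) :
    (zagierNumerator a b c : K[X]).coeff (a + b + c - 1) = 1 := by
  have h₁ : a + b + c - 1 ≠ a - 1 := by omega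
  have h₂ : a + b + c - 1 ≠ b - 1 := by omega
  have h₃ : a + b + c - 1 ≠ c - 1 := by omega
  simp [zagierNumerator, coeff_X_pow, h₁, h₂, h₃]

theorem natDegree_zagierDenominator {a b c : ℕ} (ha : 0 < a) (hb : 0 < b) (hc : 0 < c) :
    (zagierDenominator a b c : K[X]).natDegree = a + b + c := by
  unfold zagierDenominator
  compute_degree!
  all_goals simp [ha.ne', hb.ne', hc.ne']

theorem coeff_two_eq_of_X_sub_one_pow_three_dvd [CharZero K] {a b c : ℕ} (ha : 0 < a)
    (hb : 0 < b) (hc : 0 < c) {T : K[X]} (hT : T.natDegree ≤ 2)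
    (h : (X - C 1) ^ 3 ∣ zagierNumerator a b c -
      ((∑ i ∈ range a, X ^ i) * (∑ i ∈ range b, X ^ i) * (∑ i ∈ range c, X ^ i)) * T) :
    T.coeff 2 = (a ^ 2 + b ^ 2 + c ^ 2) / (3 * a * b * c) := by
  have hjet := coeff_two_of_X_pow_three_dvd_sub_mul
    (by simpa only [map_sub, taylor_mul] using X_pow_dvd_taylor h)
  simp only [zagierNumerator, map_add, coeff_add, coeff_taylor_one_X_pow, mul_coeff_zero,
    coeff_mul_one, coeff_mul_two, coeff_taylor_one_geom_sum, coeff_taylor_of_natDegree_le hT,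
    Nat.reduceAdd, Nat.choose_zero_right, Nat.choose_one_right, Nat.cast_choose_two,
    Nat.cast_choose_three] at hjet
  have hn : ((a + b + c - 1 : ℕ) : K) = a + b + c - 1 := by
    rw [Nat.cast_sub (by omega)]
    push_cast
    ring
  rw [hn, Nat.cast_pred ha, Nat.cast_pred hb, Nat.cast_pred hc] at hjet
  have habc : (a * b * c : K) ≠ 0 := by simp [ha.ne', hb.ne', hc.ne']
  rw [eq_div_iff (by simp [ha.ne', hb.ne', hc.ne'])]
  refine mul_left_cancel₀ (pow_ne_zero 2 habc) ?_
  linear_combination 3 * hjet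

theorem eval_zagierNumerator_div_eval_derivative [CharZero K] {a b c : ℕ} (ha : 0 < a)
    (hb : 0 < b) (hc : 0 < c) {x : K} (hx : x ^ a = 1) :
    (zagierNumerator a b c).eval x / (zagierDenominator a b c).derivative.eval x =
      (x ^ b + 1) / (x ^ b - 1) * ((x ^ c + 1) / (x ^ c - 1)) / a := by
  have hx0 : x ^ (a - 1) ≠ 0 := pow_ne_zero _ (by rintro rfl; simp [ha.ne'] at hx)
  have hpred : ∀ m, 0 < m → x ^ (m - 1) = x ^ (a - 1) * x ^ m := fun m hm => by
    rw [← pow_add, show a - 1 + m = m - 1 + a by omega, pow_add, hx, mul_one]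
  have hnum : (zagierNumerator a b c).eval x = x ^ (a - 1) * ((x ^ b + 1) * (x ^ c + 1)) := by
    simp only [zagierNumerator, eval_add, eval_pow, eval_X]
    rw [hpred b hb, hpred c hc, show a + b + c - 1 = a - 1 + b + c by omega, pow_add, pow_add]
    ring
  have hden : (zagierDenominator a b c).derivative.eval x =
      x ^ (a - 1) * (a * ((x ^ b - 1) * (x ^ c - 1))) := by
    simp only [zagierDenominator, derivative_mul, derivative_sub, derivative_X_pow, map_natCast,
      derivative_one, sub_zero, eval_add, eval_mul, eval_natCast, eval_pow, eval_X, eval_sub,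
      eval_one, hx, sub_self, zero_mul, add_zero]
    ring
  rw [hnum, hden, mul_div_mul_left _ _ hx0, div_mul_div_comm, div_div, mul_comm (a : K)]

end ZagierPolynomials

open Complex in
theorem exp_add_one_div_exp_sub_one (z : ℂ) :
    (exp (2 * I * z) + 1) / (exp (2 * I * z) - 1) = -I * cot z := by
  rw [cot_eq_exp_ratio, ← neg_sub, div_neg, mul_div_left_comm, ← div_div, neg_div,
    div_self I_ne_zero]
  ring

section RootsOfUnity

variable {K : Type*} [Field K] [DecidableEq K] {ζ : K} {n : ℕ}

theorem prod_erase_one_nthRootsFinset (hn : 0 < n) (hζ : IsPrimitiveRoot ζ n) :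
    ∏ x ∈ (nthRootsFinset n (1 : K)).erase 1, (X - C x) = ∑ i ∈ range n, X ^ i := by
  refine mul_left_cancel₀ (X_sub_C_ne_zero (1 : K)) ?_
  rw [mul_prod_erase _ (fun x => X - C x) (one_mem_nthRootsFinset hn),
    ← X_pow_sub_one_eq_prod hn hζ, map_one, mul_comm, geom_sum_mul]

theorem disjoint_erase_one_nthRootsFinset {m : ℕ} (hm : 0 < m) (hn : 0 < n)
    (hmn : m.Coprime n) :
    Disjoint ((nthRootsFinset m (1 : K)).erase 1) ((nthRootsFinset n (1 : K)).erase 1) := by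
  refine disjoint_left.2 fun x hxm hxn => (mem_erase.1 hxm).1 ?_
  exact (pow_eq_one_iff_of_coprime hmn).1 ⟨(mem_nthRootsFinset hm 1).1 (mem_erase.1 hxm).2,
    (mem_nthRootsFinset hn 1).1 (mem_erase.1 hxn).2⟩

theorem erase_one_nthRootsFinset_eq_image (hn : 0 < n) (hζ : IsPrimitiveRoot ζ n) :
    (nthRootsFinset n (1 : K)).erase 1 = (Ico 1 n).image (ζ ^ ·) := by
  have : NeZero n := ⟨hn.ne'⟩
  ext x
  simp only [mem_erase, mem_nthRootsFinset hn, mem_image, mem_Ico]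
  constructor
  · rintro ⟨hx1, hxn⟩
    obtain ⟨k, hk, rfl⟩ := hζ.eq_pow_of_pow_eq_one hxn
    exact ⟨k, ⟨Nat.one_le_iff_ne_zero.2 (by rintro rfl; exact hx1 (pow_zero ζ)), hk⟩, rfl⟩
  · rintro ⟨k, ⟨hk1, hkn⟩, rfl⟩
    refine ⟨hζ.pow_ne_one_of_pos_of_lt (by omega) hkn, ?_⟩
    rw [← pow_mul, mul_comm, pow_mul, hζ.pow_eq_one, one_pow]

theorem sum_erase_one_nthRootsFinset {M : Type*} [AddCommMonoid M] (hn : 0 < n)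
    (hζ : IsPrimitiveRoot ζ n) (f : K → M) :
    ∑ x ∈ (nthRootsFinset n (1 : K)).erase 1, f x = ∑ k ∈ Ico 1 n, f (ζ ^ k) := by
  rw [erase_one_nthRootsFinset_eq_image hn hζ, sum_image fun i hi j hj => hζ.injOn_pow
    (by simp at hi ⊢; omega) (by simp at hj ⊢; omega)]

end RootsOfUnity

open Complex in
theorem ofReal_zagierSum2_eq_sum {a b c : ℕ} (ha : 0 < a) (hb : 0 < b) (hc : 0 < c) :
    (zagierSum2 a b c : ℂ) = ∑ x ∈ (nthRootsFinset a (1 : ℂ)).erase 1,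
      (zagierNumerator a b c).eval x / (zagierDenominator a b c).derivative.eval x := by
  have hζ := isPrimitiveRoot_exp a ha.ne'
  have hpow : ∀ k m : ℕ,
      (exp (2 * Real.pi * I / a) ^ k) ^ m = exp (2 * I * (Real.pi * k * m / a)) := fun k m => by
    rw [← pow_mul, ← exp_nat_mul]
    push_cast
    ring_nf
  rw [zagierSum2]
  push_cast
  rw [sum_erase_one_nthRootsFinset ha hζ, mul_sum]
  refine sum_congr rfl fun k _ => ?_
  have hroot : (exp (2 * Real.pi * I / a) ^ k) ^ a = 1 := by
    rw [← pow_mul, mul_comm k a, pow_mul, hζ.pow_eq_one, one_pow]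
  rw [eval_zagierNumerator_div_eval_derivative ha hb hc hroot, hpow, hpow,
    exp_add_one_div_exp_sub_one, exp_add_one_div_exp_sub_one]
  ring_nf
  rw [I_sq]
  ring

noncomputable def zagierPoles (a b c : ℕ) : Finset ℂ :=
  (nthRootsFinset a (1 : ℂ)).erase 1 ∪ (nthRootsFinset b (1 : ℂ)).erase 1 ∪
    (nthRootsFinset c (1 : ℂ)).erase 1

section ZagierPoles

variable {a b c : ℕ}

theorem ne_one_of_mem_zagierPoles {s : ℂ} (hs : s ∈ zagierPoles a b c) : s ≠ 1 := by
  simp only [zagierPoles, mem_union, mem_erase] at hs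
  tauto

@[to_additive]
theorem prod_zagierPoles {M : Type*} [CommMonoid M] (ha : 0 < a) (hb : 0 < b) (hc : 0 < c)
    (hab : a.Coprime b) (hac : a.Coprime c) (hbc : b.Coprime c) (f : ℂ → M) :
    ∏ s ∈ zagierPoles a b c, f s = (∏ s ∈ (nthRootsFinset a (1 : ℂ)).erase 1, f s) *
      (∏ s ∈ (nthRootsFinset b (1 : ℂ)).erase 1, f s) *
        ∏ s ∈ (nthRootsFinset c (1 : ℂ)).erase 1, f s := by
  rw [zagierPoles, prod_union (disjoint_union_left.2 ⟨disjoint_erase_one_nthRootsFinset ha hc hac,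
    disjoint_erase_one_nthRootsFinset hb hc hbc⟩),
    prod_union (disjoint_erase_one_nthRootsFinset ha hb hab)]

theorem prod_X_sub_C_zagierPoles (ha : 0 < a) (hb : 0 < b) (hc : 0 < c)
    (hab : a.Coprime b) (hac : a.Coprime c) (hbc : b.Coprime c) :
    ∏ s ∈ zagierPoles a b c, (X - C s) =
      (∑ i ∈ range a, X ^ i) * (∑ i ∈ range b, X ^ i) * (∑ i ∈ range c, X ^ i) := by
  rw [prod_zagierPoles ha hb hc hab hac hbc,
    prod_erase_one_nthRootsFinset ha (Complex.isPrimitiveRoot_exp _ ha.ne'),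
    prod_erase_one_nthRootsFinset hb (Complex.isPrimitiveRoot_exp _ hb.ne'),
    prod_erase_one_nthRootsFinset hc (Complex.isPrimitiveRoot_exp _ hc.ne')]

theorem X_sub_one_pow_three_mul_prod_zagierPoles (ha : 0 < a) (hb : 0 < b) (hc : 0 < c)
    (hab : a.Coprime b) (hac : a.Coprime c) (hbc : b.Coprime c) :
    (X - C 1) ^ 3 * ∏ s ∈ zagierPoles a b c, (X - C s) = zagierDenominator a b c := by
  rw [prod_X_sub_C_zagierPoles ha hb hc hab hac hbc, zagierDenominator, ← geom_sum_mul,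
    ← geom_sum_mul, ← geom_sum_mul, map_one]
  ring

theorem sum_zagierPoles_eval_div_eval_derivative (ha : 0 < a) (hb : 0 < b) (hc : 0 < c)
    (hab : a.Coprime b) (hac : a.Coprime c) (hbc : b.Coprime c) :
    ∑ s ∈ zagierPoles a b c,
        (zagierNumerator a b c).eval s / (zagierDenominator a b c).derivative.eval s =
      ((zagierSum2 a b c + zagierSum2 b a c + zagierSum2 c a b : ℝ) : ℂ) := by
  rw [sum_zagierPoles ha hb hc hab hac hbc, Complex.ofReal_add, Complex.ofReal_add,
    ofReal_zagierSum2_eq_sum ha hb hc, ofReal_zagierSum2_eq_sum hb ha hc,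
    ofReal_zagierSum2_eq_sum hc ha hb, zagierNumerator_swap a b c, zagierDenominator_swap a b c,
    zagierNumerator_rotate a b c, zagierDenominator_rotate a b c]

end ZagierPoles

theorem zagier_reciprocity_dim2 (a₀ a₁ a₂ : ℕ) (h₀ : 0 < a₀) (h₁ : 0 < a₁)
    (h₂ : 0 < a₂) (h₀₁ : Nat.Coprime a₀ a₁) (h₀₂ : Nat.Coprime a₀ a₂)
    (h₁₂ : Nat.Coprime a₁ a₂) :
    zagierSum2 a₀ a₁ a₂ + zagierSum2 a₁ a₀ a₂ + zagierSum2 a₂ a₀ a₁ =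
      1 - ((a₀ : ℝ) ^ 2 + (a₁ : ℝ) ^ 2 + (a₂ : ℝ) ^ 2) / (3 * a₀ * a₁ * a₂) := by
  have hR : ((X - C (1 : ℂ)) ^ 3).natDegree = 3 := by rw [natDegree_pow, natDegree_X_sub_C]
  have hdeg := natDegree_zagierNumerator_le (K := ℂ) a₀ a₁ a₂
  obtain ⟨T, hT, hdvd, hcoeff⟩ := exists_residue_decomposition (S := zagierPoles a₀ a₁ a₂)
    (P := zagierNumerator a₀ a₁ a₂) ((monic_X_sub_C 1).pow 3) (by rw [hR]; norm_num)
    (fun s hs => by simpa [sub_eq_zero] using ne_one_of_mem_zagierPoles hs)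
    (by rw [X_sub_one_pow_three_mul_prod_zagierPoles h₀ h₁ h₂ h₀₁ h₀₂ h₁₂,
      natDegree_zagierDenominator h₀ h₁ h₂]; omega)
  rw [prod_X_sub_C_zagierPoles h₀ h₁ h₂ h₀₁ h₀₂ h₁₂] at hdvd
  rw [hR, X_sub_one_pow_three_mul_prod_zagierPoles h₀ h₁ h₂ h₀₁ h₀₂ h₁₂,
    natDegree_zagierDenominator h₀ h₁ h₂, coeff_zagierNumerator h₁ h₂,
    sum_zagierPoles_eval_div_eval_derivative h₀ h₁ h₂ h₀₁ h₀₂ h₁₂,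
    coeff_two_eq_of_X_sub_one_pow_three_dvd h₀ h₁ h₂ (by omega) hdvd] at hcoeff
  apply Complex.ofReal_injective
  push_cast at hcoeff ⊢
  linear_combination -hcoeff
end
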